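/- arXiv:2308.10353 — 5 statements merged into one kernel-verified Lean document; each statement's English description precedes it below -/
import Mathlib

section
/- Let X be a metric measure space and Γ a family of rectifiable curves in X. If AM(Γ) = 0, then there exists a sequence (ρ_i) of nonnegative Borel functions on X with sup_i ∫_X ρ_i dμ < ∞ such that for every curve γ ∈ Γ, liminf_{i→∞} ∫_γ ρ_i ds = ∞. -/
open MeasureTheory Filter Set Metric
open scoped ENNReal NNReal Topology

noncomputable section

namespace BVAMPaper

/-- A nonconstant compact rectifiable curve in `X`, parametrized by arclength on `[0, len]`. -/
structure Curve (X : Type*) [MetricSpace X] : Type _ where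
  len : ℝ
  len_pos : 0 < len
  toFun : ℝ → X
  lip : LipschitzOnWith 1 toFun (Set.Icc 0 len)
  nonconst : ∃ s ∈ Set.Icc (0:ℝ) len, ∃ t ∈ Set.Icc (0:ℝ) len, toFun s ≠ toFun t

variable {X : Type*} [MetricSpace X]

/-- The line integral `∫_γ ρ ds` of `ρ` over the arclength-parametrized curve `γ`. -/
def Curve.integral (γ : Curve X) (ρ : X → ℝ≥0∞) : ℝ≥0∞ :=
  ∫⁻ t in Set.Icc 0 γ.len, ρ (γ.toFun t)

/-- The line integral of `ρ` over the subcurve `γ|_{[s,t]}`. -/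
def Curve.integralOn (γ : Curve X) (s t : ℝ) (ρ : X → ℝ≥0∞) : ℝ≥0∞ :=
  ∫⁻ r in Set.Icc s t, ρ (γ.toFun r)

variable [MeasurableSpace X]

/-- The 1-modulus of a family of curves. -/
def Mod1 (μ : Measure X) (Γ : Set (Curve X)) : ℝ≥0∞ :=
  ⨅ (ρ : X → ℝ≥0∞) (_ : Measurable ρ ∧ ∀ γ ∈ Γ, 1 ≤ Curve.integral γ ρ), ∫⁻ x, ρ x ∂μ

/-- A sequence admissible for the AM-modulus of `Γ`. -/
def AMAdmissible (Γ : Set (Curve X)) (ρ : ℕ → X → ℝ≥0∞) : Prop :=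
  (∀ i, Measurable (ρ i)) ∧
    ∀ γ ∈ Γ, 1 ≤ Filter.atTop.liminf fun i => Curve.integral γ (ρ i)

/-- The AM-modulus of a family of curves. -/
def AM (μ : Measure X) (Γ : Set (Curve X)) : ℝ≥0∞ :=
  ⨅ (ρ : ℕ → X → ℝ≥0∞) (_ : AMAdmissible Γ ρ),
    Filter.atTop.liminf fun i => ∫⁻ x, ρ i x ∂μ

section Target
variable {Y : Type*} [EMetricSpace Y]

/-- `g` is an upper gradient of `u`. -/
def IsUpperGradient (u : X → Y) (g : X → ℝ≥0∞) : Prop :=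
  ∀ γ : Curve X, edist (u (γ.toFun γ.len)) (u (γ.toFun 0)) ≤ Curve.integral γ g

/-- `(ρ i)` is an AM-bounding sequence for `u` relative to the set `U`. -/
def AMBoundingOn (μ : Measure X) (U : Set X) (u : X → Y) (ρ : ℕ → X → ℝ≥0∞) : Prop :=
  (∀ i, Measurable (ρ i)) ∧
    ∃ Γ : Set (Curve X), AM μ Γ = 0 ∧
      ∀ γ : Curve X, γ ∉ Γ → (∀ r ∈ Set.Icc (0:ℝ) γ.len, γ.toFun r ∈ U) →
        ∃ N : Set ℝ, volume N = 0 ∧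
          ∀ s t : ℝ, s ∈ Set.Icc (0:ℝ) γ.len → t ∈ Set.Icc (0:ℝ) γ.len →
            s ∉ N → t ∉ N → s < t →
              edist (u (γ.toFun s)) (u (γ.toFun t)) ≤
                Filter.atTop.liminf fun i => Curve.integralOn γ s t (ρ i)

/-- `(ρ i)` is an AM-bounding sequence for `u`. -/
def AMBounding (μ : Measure X) (u : X → Y) (ρ : ℕ → X → ℝ≥0∞) : Prop :=
  AMBoundingOn μ Set.univ u ρ

/-- A strong bounding sequence: the bounding inequality holds along every nonconstant
compact rectifiable curve, with no exceptional curve family. -/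
def StrongBounding (u : X → Y) (ρ : ℕ → X → ℝ≥0∞) : Prop :=
  (∀ i, Measurable (ρ i)) ∧
    ∀ γ : Curve X, ∃ N : Set ℝ, volume N = 0 ∧
      ∀ s t : ℝ, s ∈ Set.Icc (0:ℝ) γ.len → t ∈ Set.Icc (0:ℝ) γ.len →
        s ∉ N → t ∉ N → s < t →
          edist (u (γ.toFun s)) (u (γ.toFun t)) ≤
            Filter.atTop.liminf fun i => Curve.integralOn γ s t (ρ i)

/-- The AM-BV energy of `u` relative to the set `U`. -/
def DAMOn (μ : Measure X) (u : X → Y) (U : Set X) : ℝ≥0∞ :=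
  ⨅ (ρ : ℕ → X → ℝ≥0∞) (_ : AMBoundingOn μ U u ρ),
    Filter.atTop.liminf fun i => ∫⁻ x in U, ρ i x ∂μ

/-- The total AM-BV energy `‖D_AM u‖(X)`. -/
def DAM (μ : Measure X) (u : X → Y) : ℝ≥0∞ := DAMOn μ u Set.univ

/-- `‖D_AM u‖(A)` for a general set `A`, via approximation by open supersets. -/
def DAMmeas (μ : Measure X) (u : X → Y) (A : Set X) : ℝ≥0∞ :=
  ⨅ (U : Set X) (_ : IsOpen U ∧ A ⊆ U), DAMOn μ u U

/-- `u ∈ L¹(X : Y)`. -/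
def MemL1 (μ : Measure X) (u : X → Y) : Prop :=
  AEStronglyMeasurable u μ ∧ ∃ y₀ : Y, ∫⁻ x, edist (u x) y₀ ∂μ < ∞

/-- `u ∈ BV_AM(X : Y)`. -/
def MemBVAM (μ : Measure X) (u : X → Y) : Prop :=
  MemL1 μ u ∧ ∃ ρ : ℕ → X → ℝ≥0∞, AMBounding μ u ρ ∧
    (Filter.atTop.liminf fun i => ∫⁻ x, ρ i x ∂μ) < ∞

/-- `u ∈ N^{1,1}(X : Y)`. -/
def MemN11 (μ : Measure X) (u : X → Y) : Prop :=
  MemL1 μ u ∧ ∃ g : X → ℝ≥0∞, Measurable g ∧ IsUpperGradient u g ∧ ∫⁻ x, g x ∂μ < ∞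

/-- The relaxed BV energy `‖Du‖(X)` of `u`, via approximation in `L¹` by
Newton–Sobolev maps with their upper gradients. -/
def DBV (μ : Measure X) (u : X → Y) : ℝ≥0∞ :=
  ⨅ (v : ℕ → X → Y) (g : ℕ → X → ℝ≥0∞)
    (_ : (∀ k, MemL1 μ (v k) ∧ Measurable (g k) ∧ IsUpperGradient (v k) (g k)) ∧
        Tendsto (fun k => ∫⁻ x, edist (v k x) (u x) ∂μ) atTop (nhds 0)),
    Filter.atTop.liminf fun k => ∫⁻ x, g k x ∂μ

/-- `u ∈ BV(X : Y)` via relaxation. -/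
def MemBV (μ : Measure X) (u : X → Y) : Prop := MemL1 μ u ∧ DBV μ u < ∞

/-- The pointwise (upper) Lipschitz constant function. -/
def lipDeriv (u : X → Y) (x : X) : ℝ≥0∞ :=
  Filter.limsup (fun y => edist (u y) (u x) / edist y x) (𝓝[≠] x)

end Target

/-- `μ` is a doubling measure with constant `Cd`. -/
def Doubling (μ : Measure X) (Cd : ℝ≥0) : Prop :=
  ∀ (x : X) (r : ℝ), 0 < r →
    0 < μ (ball x r) ∧ μ (ball x (2 * r)) ≤ Cd * μ (ball x r) ∧ μ (ball x (2 * r)) < ∞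

/-- `X` supports a 1-Poincaré inequality with constants `C`, `lam`. -/
def Poincare (μ : Measure X) (C lam : ℝ) : Prop :=
  ∀ (f : X → ℝ) (g : X → ℝ≥0∞), LocallyIntegrable f μ → Measurable g → IsUpperGradient f g →
    ∀ (x : X) (r : ℝ), 0 < r →
      (μ (ball x r))⁻¹ * ∫⁻ y in ball x r, (‖f y - ⨍ z in ball x r, f z ∂μ‖₊ : ℝ≥0∞) ∂μ ≤
        ENNReal.ofReal (C * r) *
          ((μ (ball x (lam * r)))⁻¹ * ∫⁻ y in ball x (lam * r), g y ∂μ)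

/-- `X` supports an AM-Poincaré inequality for `V`-valued maps. -/
def AMPoincare (μ : Measure X) (V : Type*) [NormedAddCommGroup V] [NormedSpace ℝ V]
    (C lam : ℝ) : Prop :=
  ∀ (u : X → V) (ρ : ℕ → X → ℝ≥0∞), MemBVAM μ u → AMBounding μ u ρ →
    ∀ (x : X) (r : ℝ), 0 < r →
      (μ (ball x r))⁻¹ * ∫⁻ y in ball x r, (‖u y - ⨍ z in ball x r, u z ∂μ‖₊ : ℝ≥0∞) ∂μ ≤
        ENNReal.ofReal (C * r) *
          Filter.atTop.liminf fun i =>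
            (μ (ball x (lam * r)))⁻¹ * ∫⁻ y in ball x (lam * r), ρ i y ∂μ

section MetricTarget
variable {Y : Type*} [MetricSpace Y]

/-- `u` is approximately continuous at `x`. -/
def ApproxCont (μ : Measure X) (u : X → Y) (x : X) : Prop :=
  ∃ y : Y, ∀ ε : ℝ, 0 < ε →
    Filter.limsup (fun r => μ (ball x r \ u ⁻¹' ball y ε) / μ (ball x r)) (𝓝[>] (0:ℝ)) = 0

/-- The jump set of `u`: points where `u` fails to be approximately continuous. -/
def jumpSet (μ : Measure X) (u : X → Y) : Set X := {x | ¬ ApproxCont μ u x}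

end MetricTarget

/-- The codimension-one Hausdorff measure of `A` relative to `μ`. -/
def codimOne (μ : Measure X) (A : Set X) : ℝ≥0∞ :=
  ⨆ (δ : ℝ) (_ : 0 < δ),
    ⨅ (c : ℕ → X) (r : ℕ → ℝ)
      (_ : (∀ i, 0 < r i ∧ r i ≤ δ) ∧ A ⊆ ⋃ i, ball (c i) (r i)),
      ∑' i, μ (ball (c i) (r i)) / ENNReal.ofReal (r i)

/-!
Since `AM(Γ) = 0`, for every `k` there is an admissible sequence `ρᵏ` whose integrals have
`liminf` below `2⁻ᵏ`; passing to a subsequence keeps admissibility and makes every integral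
smaller than `2⁻ᵏ`. The diagonal sums `ρⱼ = ∑_{k ≤ j} ρᵏⱼ` then have integrals at most
`∑ₖ 2⁻ᵏ = 2`, while along a curve of `Γ` each of the first `m` summands eventually contributes
more than `1/2`, so the `liminf` of the line integrals exceeds `m / 2` for every `m`.
-/

theorem sum_lintegral_le_lintegral_sum {α ι : Type*} [MeasurableSpace α] (ν : Measure α)
    (s : Finset ι) (f : ι → α → ℝ≥0∞) :
    ∑ i ∈ s, ∫⁻ x, f i x ∂ν ≤ ∫⁻ x, ∑ i ∈ s, f i x ∂ν := by
  classical
  induction s using Finset.induction_on with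
  | empty => simp
  | insert i s hi ih =>
    simp only [Finset.sum_insert hi]
    exact (add_le_add le_rfl ih).trans (le_lintegral_add _ _)

theorem liminf_sum_range_eq_top (a : ℕ → ℕ → ℝ≥0∞) {c : ℝ≥0∞} (hc : c ≠ 0)
    (h : ∀ k, c < atTop.liminf (a k)) :
    atTop.liminf (fun j => ∑ k ∈ Finset.range (j + 1), a k j) = ∞ := by
  have hmul : ∀ m : ℕ,
      (m : ℝ≥0∞) * c ≤ atTop.liminf fun j => ∑ k ∈ Finset.range (j + 1), a k j := by
    intro m
    have hev : ∀ᶠ j in atTop, ∀ k ∈ Finset.range m, c < a k j :=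
      (eventually_all_finset _).2 fun k _ => eventually_lt_of_lt_liminf (h k)
    refine le_liminf_of_le (by isBoundedDefault) ?_
    filter_upwards [hev, eventually_ge_atTop m] with j hj hmj
    calc (m : ℝ≥0∞) * c = ∑ k ∈ Finset.range m, c := by simp
      _ ≤ ∑ k ∈ Finset.range m, a k j := Finset.sum_le_sum fun k hk => (hj k hk).le
      _ ≤ ∑ k ∈ Finset.range (j + 1), a k j :=
        Finset.sum_le_sum_of_subset (Finset.range_subset_range.2 (by omega))
  by_contra hne
  obtain ⟨m, hm⟩ := ENNReal.exists_nat_mul_gt hc hne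
  exact (hm.trans_le (hmul m)).false

theorem AMAdmissible.comp_strictMono {Γ : Set (Curve X)} {ρ : ℕ → X → ℝ≥0∞}
    (hρ : AMAdmissible Γ ρ) {φ : ℕ → ℕ} (hφ : StrictMono φ) : AMAdmissible Γ (ρ ∘ φ) :=
  ⟨fun i => hρ.1 (φ i), fun γ hγ => (hρ.2 γ hγ).trans
    (hφ.tendsto_atTop.liminf_le_liminf_comp (u := fun i => γ.integral (ρ i)))⟩

theorem exists_amAdmissible_forall_lintegral_lt {μ : Measure X} {Γ : Set (Curve X)}
    {c : ℝ≥0∞} (h : AM μ Γ < c) :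
    ∃ ρ, AMAdmissible Γ ρ ∧ ∀ i, ∫⁻ x, ρ i x ∂μ < c := by
  obtain ⟨ρ, hρ, hlt⟩ :
      ∃ ρ, AMAdmissible Γ ρ ∧ atTop.liminf (fun i => ∫⁻ x, ρ i x ∂μ) < c := by
    simpa only [AM, iInf_lt_iff, exists_prop] using h
  obtain ⟨φ, hφ, hφlt⟩ :=
    extraction_of_frequently_atTop (frequently_lt_of_liminf_lt (by isBoundedDefault) hlt)
  exact ⟨ρ ∘ φ, hρ.comp_strictMono hφ, hφlt⟩

/-- If `AM(Γ) = 0`, there is a sequence of nonnegative Borel functions with uniformly bounded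
integrals whose line integrals blow up along every curve of `Γ`. -/
theorem statement0 {X : Type*} [MetricSpace X] [MeasurableSpace X] (μ : Measure X)
    (Γ : Set (Curve X)) (h : AM μ Γ = 0) :
    ∃ ρ : ℕ → X → ℝ≥0∞, (∀ i, Measurable (ρ i)) ∧
      (⨆ i, ∫⁻ x, ρ i x ∂μ) < ∞ ∧
      ∀ γ ∈ Γ, (Filter.atTop.liminf fun i => Curve.integral γ (ρ i)) = ∞ := by
  have hsmall : ∀ k : ℕ, AM μ Γ < 2⁻¹ ^ k := fun k => h ▸ ENNReal.pow_pos (by simp) k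
  choose ρ hadm hlt using fun k => exists_amAdmissible_forall_lintegral_lt (hsmall k)
  refine ⟨fun j x => ∑ k ∈ Finset.range (j + 1), ρ k j x,
    fun j => Finset.measurable_sum _ fun k _ => (hadm k).1 j, ?_, fun γ hγ => ?_⟩
  · refine lt_of_le_of_lt (iSup_le fun j => ?_) (ENNReal.ofNat_lt_top (n := 2))
    calc ∫⁻ x, ∑ k ∈ Finset.range (j + 1), ρ k j x ∂μ
        = ∑ k ∈ Finset.range (j + 1), ∫⁻ x, ρ k j x ∂μ :=
          lintegral_finsetSum _ fun k _ => (hadm k).1 j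
      _ ≤ ∑ k ∈ Finset.range (j + 1), 2⁻¹ ^ k := Finset.sum_le_sum fun k _ => (hlt k j).le
      _ ≤ ∑' k, 2⁻¹ ^ k := ENNReal.sum_le_tsum _
      _ = 2 := ENNReal.tsum_geometric_two
  · have hblowup := liminf_sum_range_eq_top (fun k j => γ.integral (ρ k j)) (c := 2⁻¹)
      (by simp) fun k => ENNReal.one_half_lt_one.trans_le ((hadm k).2 γ hγ)
    -- `ρ k j ∘ γ.toFun` need not be measurable, so only superadditivity of `∫⁻` is available.
    refine top_le_iff.1 (hblowup ▸ liminf_le_liminf (Eventually.of_forall fun j => ?_))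
    exact sum_lintegral_le_lintegral_sum _ _ fun k t => ρ k j (γ.toFun t)

end BVAMPaper
end
end

section
/- Suppose (ρ_i) is an AM-bounding sequence for u : X → V, and η is a nonnegative L-Lipschitz function supported in a bounded set U and constant on an open set V₀ compactly contained in U. Then (η ρ_i + L·‖u‖·χ_{U \ V₀})_i is an AM-bounding sequence for η u. -/
open MeasureTheory Filter Set Metric
open scoped ENNReal NNReal Topology

noncomputable section

namespace BVAMPaper

variable {X : Type*} [MetricSpace X]

variable [MeasurableSpace X]

/-!
Along a curve `γ` the claim is one-dimensional, for `f = η ∘ γ` and `g = u ∘ γ`. Since `η ≥ 0` is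
constant on `V₀` and vanishes off `U`, `f' = 0` off `T = γ⁻¹(U \ V₀)`, so
`|f a - f b| ≤ L |T ∩ [a, b]|`. Writing `f a g a - f b g b = f a (g a - g b) + (f a - f b) g b`,
the first term is at most `(min f + L (b - a)) · liminf ∫ ρ_i` with `min f · ∫ ρ_i ≤ ∫ f ρ_i`, and
in the second `‖g b‖` is compared with the average of `‖g‖` over `T ∩ [a, b]` up to the same
`liminf ∫ ρ_i`. Summing over partitions of small mesh removes the error `L (b - a) liminf ∫ ρ_i`
wherever `liminf ∫ ρ_i` is finite, which is the case on intervals where `f > 0`. Near a zero `z` of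
`f` we have `f ≤ L |r - z|`, and the points where `f` is small and positive lie in `T`, so
`f ‖g‖` is small somewhere near `z`: this joins the endpoints to the first and last zero of `f`,
where `η u` vanishes.
-/

lemma liminf_add_liminf_le (u v : ℕ → ℝ≥0∞) :
    atTop.liminf u + atTop.liminf v ≤ atTop.liminf (u + v) := by
  have hmono : ∀ w : ℕ → ℝ≥0∞, Monotone fun n => ⨅ i ≥ n, w i :=
    fun w _ _ hab => le_iInf₂ fun i hi => iInf₂_le i (hab.trans hi)
  simp only [liminf_eq_iSup_iInf_of_nat]
  rw [ENNReal.iSup_add_iSup_of_monotone (hmono u) (hmono v)]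
  exact iSup_mono fun n => le_iInf₂ fun i hi => add_le_add (iInf₂_le i hi) (iInf₂_le i hi)

lemma _root_.ENNReal.le_of_forall_pos_le_add_ofReal_mul {x y C : ℝ≥0∞} (hC : C ≠ ∞)
    (h : ∀ δ : ℝ, 0 < δ → x ≤ y + ENNReal.ofReal δ * C) : x ≤ y := by
  have hδ : Tendsto (fun δ : ℝ => ENNReal.ofReal δ) (𝓝[>] 0) (𝓝 0) := by
    simpa using (ENNReal.tendsto_ofReal (tendsto_id (x := 𝓝 (0 : ℝ)))).mono_left
      nhdsWithin_le_nhds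
  have : Tendsto (fun δ : ℝ => y + ENNReal.ofReal δ * C) (𝓝[>] 0) (𝓝 y) := by
    simpa using tendsto_const_nhds.add (ENNReal.Tendsto.mul_const hδ (Or.inr hC))
  exact ge_of_tendsto this (eventually_nhdsWithin_of_forall h)

lemma exists_mem_Icc_notMem_of_volume_eq_zero {N : Set ℝ} (hN : volume N = 0) {x y : ℝ}
    (hxy : x < y) : ∃ c ∈ Icc x y, c ∉ N := by
  by_contra! h
  have := measure_mono_null h hN
  simp [Real.volume_Icc] at this
  linarith

lemma tendsto_restrict_volume_Icc_sub_add (S : Set ℝ) (z : ℝ) :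
    Tendsto (fun δ => volume.restrict S (Icc (z - δ) (z + δ))) (𝓝[>] 0) (𝓝 0) := by
  have : Tendsto (fun δ : ℝ => ENNReal.ofReal (2 * δ)) (𝓝 0) (𝓝 0) := by
    simpa using ENNReal.tendsto_ofReal ((tendsto_id (x := 𝓝 (0 : ℝ))).const_mul 2)
  refine tendsto_of_tendsto_of_tendsto_of_le_of_le tendsto_const_nhds
    (this.mono_left nhdsWithin_le_nhds) (fun _ => zero_le) fun δ => ?_
  exact Measure.restrict_apply_le _ _ |>.trans_eq (by rw [Real.volume_Icc]; ring_nf)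

lemma edist_le_of_superadditive {E : Type*} [PseudoEMetricSpace E] {φ : ℝ → E}
    {Φ : ℝ → ℝ → ℝ≥0∞} {N : Set ℝ} (hN : volume N = 0) {s t δ : ℝ} (hδ : 0 < δ)
    (hΦ : ∀ a c b, a ≤ c → c ≤ b → Φ a c + Φ c b ≤ Φ a b)
    (hloc : ∀ a ∈ Icc s t, ∀ b ∈ Icc s t, a ∉ N → b ∉ N → a < b → b - a ≤ δ →
      edist (φ a) (φ b) ≤ Φ a b)
    {a b : ℝ} (ha : a ∈ Icc s t) (hb : b ∈ Icc s t) (haN : a ∉ N) (hbN : b ∉ N) (hab : a < b) :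
    edist (φ a) (φ b) ≤ Φ a b := by
  obtain ⟨n, hn⟩ := exists_nat_gt ((b - a) / (δ / 2))
  rw [div_lt_iff₀ (by positivity)] at hn
  induction n generalizing a with
  | zero => simp at hn; linarith
  | succ n ih =>
    by_cases hδab : b - a ≤ δ
    · exact hloc a ha b hb haN hbN hab hδab
    obtain ⟨c, hc, hcN⟩ :=
      exists_mem_Icc_notMem_of_volume_eq_zero hN (by linarith : a + δ / 2 < a + δ)
    have hcs : c ∈ Icc s t := ⟨by linarith [ha.1, hc.1], by linarith [hb.2, hc.2]⟩
    calc edist (φ a) (φ b) ≤ edist (φ a) (φ c) + edist (φ c) (φ b) := edist_triangle _ _ _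
      _ ≤ Φ a c + Φ c b :=
        add_le_add (hloc a ha c hcs haN hcN (by linarith [hc.1]) (by linarith [hc.2]))
          (ih hcs hcN (by linarith [hc.2]) (by push_cast at hn; linarith [hc.1]))
      _ ≤ Φ a b := hΦ a c b (by linarith [hc.1]) (by linarith [hc.2])

lemma _root_.LipschitzWith.edist_le_mul_volume {f : ℝ → ℝ} {L : ℝ≥0} (hf : LipschitzWith L f)
    {T : Set ℝ} (hT : MeasurableSet T) (hderiv : ∀ x ∉ T, deriv f x = 0) {a b : ℝ}
    (hab : a ≤ b) : edist (f a) (f b) ≤ L * volume (T ∩ Icc a b) := by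
  have hderiv_le : ∀ x, ‖deriv f x‖ₑ ≤ T.indicator (fun _ => (L : ℝ≥0∞)) x := by
    intro x
    by_cases hx : x ∈ T
    · rw [indicator_of_mem hx, ← ofReal_norm, ← ENNReal.ofReal_coe_nnreal]
      exact ENNReal.ofReal_le_ofReal (norm_deriv_le_of_lipschitz hf)
    · simp [hderiv x hx]
  calc edist (f a) (f b) = ‖∫ x in Ioc a b, deriv f x‖ₑ := by
        rw [edist_comm, edist_eq_enorm_sub, ← intervalIntegral.integral_of_le hab,
          (hf.lipschitzOnWith (s := uIcc a b)).absolutelyContinuousOnInterval.integral_deriv_eq_sub]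
    _ ≤ ∫⁻ x in Ioc a b, T.indicator (fun _ => (L : ℝ≥0∞)) x :=
        (enorm_integral_le_lintegral_enorm _).trans (lintegral_mono hderiv_le)
    _ = L * volume (T ∩ Ioc a b) := by
        rw [lintegral_indicator_const hT, Measure.restrict_apply hT]
    _ ≤ L * volume (T ∩ Icc a b) := by gcongr; exact Ioc_subset_Icc_self

lemma edist_smul_smul_le {V : Type*} [NormedAddCommGroup V] [NormedSpace ℝ V] (c d : ℝ)
    (x y : V) : edist (c • x) (d • y) ≤ ‖c‖ₑ * edist x y + edist c d * ‖y‖ₑ := by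
  simp only [edist_eq_enorm_sub]
  calc ‖c • x - d • y‖ₑ = ‖c • (x - y) + (c - d) • y‖ₑ := by congr 1; module
    _ ≤ ‖c • (x - y)‖ₑ + ‖(c - d) • y‖ₑ := enorm_add_le _ _
    _ = _ := by rw [enorm_smul, enorm_smul]

def liminfIntegral (F : ℕ → ℝ → ℝ≥0∞) (a b : ℝ) : ℝ≥0∞ :=
  atTop.liminf fun i => ∫⁻ r in Icc a b, F i r

section liminfIntegral
variable {F F' : ℕ → ℝ → ℝ≥0∞} {a b c a' b' : ℝ}

lemma liminfIntegral_mono_set (h : Icc a' b' ⊆ Icc a b) :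
    liminfIntegral F a' b' ≤ liminfIntegral F a b :=
  liminf_le_liminf (.of_forall fun _ => lintegral_mono_set h)

lemma liminfIntegral_mono (h : ∀ i, ∀ r ∈ Icc a b, F i r ≤ F' i r) :
    liminfIntegral F a b ≤ liminfIntegral F' a b :=
  liminf_le_liminf (.of_forall fun i => setLIntegral_mono' measurableSet_Icc (h i))

lemma liminfIntegral_const (G : ℝ → ℝ≥0∞) :
    liminfIntegral (fun _ => G) a b = ∫⁻ r in Icc a b, G r :=
  liminf_const _

lemma liminfIntegral_const_mul {k : ℝ≥0∞} (hk : k ≠ ∞) :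
    liminfIntegral (fun i r => k * F i r) a b = k * liminfIntegral F a b := by
  simp only [liminfIntegral, lintegral_const_mul' k _ hk]
  exact ENNReal.liminf_const_mul_of_ne_top hk

lemma liminfIntegral_add_le :
    liminfIntegral F a b + liminfIntegral F' a b ≤ liminfIntegral (F + F') a b :=
  (liminf_add_liminf_le _ _).trans
    (liminf_le_liminf (.of_forall fun i => le_lintegral_add (F i) (F' i)))

lemma liminfIntegral_add_liminfIntegral_le (hac : a ≤ c) (hcb : c ≤ b) :
    liminfIntegral F a c + liminfIntegral F c b ≤ liminfIntegral F a b := by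
  refine (liminf_add_liminf_le _ _).trans (liminf_le_liminf (.of_forall fun i => le_of_eq ?_))
  simp only [Pi.add_apply]
  rw [← setLIntegral_congr (Ioc_ae_eq_Icc (a := c) (b := b)),
    ← lintegral_union measurableSet_Ioc (disjoint_left.2 fun r hr hr' => hr'.1.not_ge hr.2),
    Icc_union_Ioc_eq_Icc hac hcb]

end liminfIntegral

def HasLiminfBound {E : Type*} [PseudoEMetricSpace E] (g : ℝ → E) (ρ : ℕ → ℝ → ℝ≥0∞)
    (N : Set ℝ) (s t : ℝ) : Prop :=
  ∀ a b, a ∈ Icc s t → b ∈ Icc s t → a ∉ N → b ∉ N → a < b →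
    edist (g a) (g b) ≤ liminfIntegral ρ a b

namespace HasLiminfBound
variable {E : Type*} [PseudoEMetricSpace E] {g : ℝ → E} {ρ : ℕ → ℝ → ℝ≥0∞} {N : Set ℝ}
  {s t s' t' : ℝ}

lemma mono (hg : HasLiminfBound g ρ N s t) (h : Icc s' t' ⊆ Icc s t) :
    HasLiminfBound g ρ N s' t' :=
  fun a b ha hb => hg a b (h ha) (h hb)

lemma edist_le (hg : HasLiminfBound g ρ N s t) {a b : ℝ} (ha : a ∈ Icc s t) (hb : b ∈ Icc s t)
    (haN : a ∉ N) (hbN : b ∉ N) : edist (g a) (g b) ≤ liminfIntegral ρ s t := by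
  rcases lt_trichotomy a b with hab | rfl | hba
  · exact (hg a b ha hb haN hbN hab).trans (liminfIntegral_mono_set (Icc_subset_Icc ha.1 hb.2))
  · simp
  · rw [edist_comm]
    exact (hg b a hb ha hbN haN hba).trans (liminfIntegral_mono_set (Icc_subset_Icc hb.1 ha.2))

lemma enorm_mul_volume_le {V : Type*} [NormedAddCommGroup V] {g : ℝ → V}
    (hg : HasLiminfBound g ρ N s t) (hN : volume N = 0) {e : ℝ} (he : e ∈ Icc s t)
    (heN : e ∉ N) {S : Set ℝ} (hS : MeasurableSet S) (hSst : S ⊆ Icc s t) :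
    ‖g e‖ₑ * volume S ≤ (∫⁻ r in S, ‖g r‖ₑ) + liminfIntegral ρ s t * volume S := by
  have hae : ∀ᵐ r ∂volume.restrict S, ‖g e‖ₑ ≤ ‖g r‖ₑ + liminfIntegral ρ s t := by
    filter_upwards [ae_restrict_mem hS, ae_restrict_of_ae (measure_eq_zero_iff_ae_notMem.1 hN)]
      with r hrS hrN
    calc ‖g e‖ₑ = edist (g e) 0 := (edist_zero_right _).symm
      _ ≤ edist (g r) 0 + edist (g e) (g r) :=
        (edist_triangle _ (g r) _).trans_eq (add_comm _ _)
      _ ≤ ‖g r‖ₑ + liminfIntegral ρ s t := by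
        rw [edist_zero_right]; gcongr; exact hg.edist_le he (hSst hrS) heN hrN
  calc ‖g e‖ₑ * volume S = ∫⁻ _ in S, ‖g e‖ₑ := (setLIntegral_const _ _).symm
    _ ≤ ∫⁻ r in S, (‖g r‖ₑ + liminfIntegral ρ s t) := lintegral_mono_ae hae
    _ = _ := by rw [lintegral_add_right _ measurable_const, setLIntegral_const]

end HasLiminfBound

def leibnizSeq {α V : Type*} [NormedAddCommGroup V] (f : α → ℝ) (g : α → V)
    (ρ : ℕ → α → ℝ≥0∞) (L : ℝ≥0) (T : Set α) (i : ℕ) (x : α) : ℝ≥0∞ :=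
  ENNReal.ofReal (f x) * ρ i x + T.indicator (fun x => (L : ℝ≥0∞) * ‖g x‖ₑ) x

lemma measurable_leibnizSeq {α V : Type*} [MeasurableSpace α] [NormedAddCommGroup V]
    {f : α → ℝ} {g : α → V} {ρ : ℕ → α → ℝ≥0∞} {L : ℝ≥0} {T : Set α} (hf : Measurable f)
    (hg : Measurable fun x => ‖g x‖ₑ) (hρ : ∀ i, Measurable (ρ i)) (hT : MeasurableSet T)
    (i : ℕ) : Measurable (leibnizSeq f g ρ L T i) :=
  ((ENNReal.measurable_ofReal.comp hf).mul (hρ i)).add ((measurable_const.mul hg).indicator hT)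

section Leibniz
variable {V : Type*} [NormedAddCommGroup V] {f : ℝ → ℝ} {g : ℝ → V}
  {ρ : ℕ → ℝ → ℝ≥0∞} {L : ℝ≥0} {N T : Set ℝ} {s t a b : ℝ}

lemma ofReal_mul_liminfIntegral_add_le {m : ℝ} (hm : ∀ r ∈ Icc a b, m ≤ f r) :
    ENNReal.ofReal m * liminfIntegral ρ a b +
        ∫⁻ r in Icc a b, T.indicator (fun r => (L : ℝ≥0∞) * ‖g r‖ₑ) r ≤
      liminfIntegral (leibnizSeq f g ρ L T) a b := by
  rw [← liminfIntegral_const_mul ENNReal.ofReal_ne_top, ← liminfIntegral_const]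
  refine liminfIntegral_add_le.trans (liminfIntegral_mono fun i r hr => ?_)
  simp only [Pi.add_apply, leibnizSeq]
  gcongr
  exact hm r hr

lemma setLIntegral_indicator_ne_top (hf0 : ∀ x, 0 ≤ f x)
    (hΛ : liminfIntegral (leibnizSeq f g ρ L T) a b ≠ ∞) :
    ∫⁻ r in Icc a b, T.indicator (fun r => (L : ℝ≥0∞) * ‖g r‖ₑ) r ≠ ∞ :=
  ne_top_of_le_ne_top hΛ
    (le_add_self.trans (ofReal_mul_liminfIntegral_add_le (m := 0) fun r _ => hf0 r))

lemma deriv_eq_zero_of_notMem (hf0 : ∀ x, 0 ≤ f x) {W : Set ℝ} {c : ℝ} (hW : IsOpen W)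
    (hfW : ∀ x ∈ W, f x = c) (hcover : ∀ x ∉ T, x ∈ W ∨ f x = 0) :
    ∀ x ∉ T, deriv f x = 0 := by
  intro x hx
  rcases hcover x hx with hxW | hx0
  · rw [Filter.EventuallyEq.deriv_eq (f := fun _ => c)
      (Filter.eventually_of_mem (hW.mem_nhds hxW) hfW)]
    exact deriv_const x c
  · exact IsLocalMin.deriv_eq_zero (Filter.Eventually.of_forall fun y => hx0 ▸ hf0 y)

lemma exists_pos_forall_mem_of_pos_of_lt {W : Set ℝ} {c : ℝ} (hfW : ∀ x ∈ W, f x = c)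
    (hcover : ∀ x ∉ T, x ∈ W ∨ f x = 0) :
    ∃ th > 0, ∀ x, 0 < f x → f x < th → x ∈ T := by
  by_cases hc : 0 < c
  · refine ⟨c, hc, fun x hx hxc => by_contra fun hxT => ?_⟩
    rcases hcover x hxT with hxW | hx0
    · exact hxc.ne (hfW x hxW)
    · exact hx.ne' hx0
  · refine ⟨1, one_pos, fun x hx _ => by_contra fun hxT => ?_⟩
    rcases hcover x hxT with hxW | hx0
    · exact hc (hfW x hxW ▸ hx)
    · exact hx.ne' hx0

variable [NormedSpace ℝ V]

lemma edist_smul_le_liminfIntegral_add (hf : LipschitzWith L f) (hf0 : ∀ x, 0 ≤ f x)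
    (hT : MeasurableSet T) (hderiv : ∀ x ∉ T, deriv f x = 0) (hN : volume N = 0)
    (hg : HasLiminfBound g ρ N a b) (haN : a ∉ N) (hbN : b ∉ N) (hab : a < b) :
    edist (f a • g a) (f b • g b) ≤
      liminfIntegral (leibnizSeq f g ρ L T) a b +
        2 * L * ENNReal.ofReal (b - a) * liminfIntegral ρ a b := by
  have ha : a ∈ Icc a b := left_mem_Icc.2 hab.le
  have hb : b ∈ Icc a b := right_mem_Icc.2 hab.le
  set D := liminfIntegral ρ a b
  set S := T ∩ Icc a b
  obtain ⟨r₀, hr₀, hmin⟩ := isCompact_Icc.exists_isMinOn (nonempty_Icc.2 hab.le)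
    hf.continuous.continuousOn
  have hfa : ENNReal.ofReal (f a) ≤ ENNReal.ofReal (f r₀) + L * ENNReal.ofReal (b - a) := by
    have hlip : f a - f r₀ ≤ L * (b - a) := by
      have := hf.dist_le_mul a r₀
      rw [Real.dist_eq, Real.dist_eq, abs_sub_comm a, abs_of_nonneg (sub_nonneg.2 hr₀.1)] at this
      linarith [le_abs_self (f a - f r₀), mul_le_mul_of_nonneg_left hr₀.2 L.coe_nonneg]
    rw [← ENNReal.ofReal_coe_nnreal, ← ENNReal.ofReal_mul L.coe_nonneg,
      ← ENNReal.ofReal_add (hf0 r₀) (mul_nonneg L.coe_nonneg (by linarith))]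
    exact ENNReal.ofReal_le_ofReal (by linarith)
  have hvol : volume S ≤ ENNReal.ofReal (b - a) :=
    (measure_mono inter_subset_right).trans_eq Real.volume_Icc
  have hG : (L : ℝ≥0∞) * ∫⁻ r in S, ‖g r‖ₑ =
      ∫⁻ r in Icc a b, T.indicator (fun r => (L : ℝ≥0∞) * ‖g r‖ₑ) r := by
    rw [lintegral_indicator hT, Measure.restrict_restrict hT,
      lintegral_const_mul' _ _ ENNReal.coe_ne_top]
  calc edist (f a • g a) (f b • g b)
      ≤ ‖f a‖ₑ * edist (g a) (g b) + edist (f a) (f b) * ‖g b‖ₑ := edist_smul_smul_le _ _ _ _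
    _ ≤ (ENNReal.ofReal (f r₀) + L * ENNReal.ofReal (b - a)) * D +
          L * volume S * ‖g b‖ₑ := by
        rw [Real.enorm_of_nonneg (hf0 a)]
        gcongr
        · exact hg a b ha hb haN hbN hab
        · exact hf.edist_le_mul_volume hT hderiv hab.le
    _ ≤ (ENNReal.ofReal (f r₀) + L * ENNReal.ofReal (b - a)) * D +
          L * ((∫⁻ r in S, ‖g r‖ₑ) + D * ENNReal.ofReal (b - a)) := by
        rw [mul_assoc, mul_comm (volume S)]
        gcongr
        exact (hg.enorm_mul_volume_le hN hb hbN (hT.inter measurableSet_Icc)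
          inter_subset_right).trans (by gcongr)
    _ = (ENNReal.ofReal (f r₀) * D + L * ∫⁻ r in S, ‖g r‖ₑ) +
          2 * L * ENNReal.ofReal (b - a) * D := by ring
    _ ≤ _ := by
        rw [hG]
        gcongr
        exact ofReal_mul_liminfIntegral_add_le fun r hr => hmin hr

lemma edist_smul_le_of_liminfIntegral_ne_top (hf : LipschitzWith L f) (hf0 : ∀ x, 0 ≤ f x)
    (hT : MeasurableSet T) (hderiv : ∀ x ∉ T, deriv f x = 0) (hN : volume N = 0)
    (hg : HasLiminfBound g ρ N s t) (hD : liminfIntegral ρ s t ≠ ∞)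
    (ha : a ∈ Icc s t) (hb : b ∈ Icc s t) (haN : a ∉ N) (hbN : b ∉ N) (hab : a < b) :
    edist (f a • g a) (f b • g b) ≤ liminfIntegral (leibnizSeq f g ρ L T) a b := by
  refine ENNReal.le_of_forall_pos_le_add_ofReal_mul (C := 2 * L * liminfIntegral ρ s t)
    (by finiteness) fun δ hδ => ?_
  set Φ := fun a b => liminfIntegral (leibnizSeq f g ρ L T) a b +
    2 * L * ENNReal.ofReal δ * liminfIntegral ρ a b
  have hΦ : ∀ a c b, a ≤ c → c ≤ b → Φ a c + Φ c b ≤ Φ a b := fun a c b hac hcb =>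
    calc
      _ = (liminfIntegral (leibnizSeq f g ρ L T) a c +
            liminfIntegral (leibnizSeq f g ρ L T) c b) +
          2 * L * ENNReal.ofReal δ * (liminfIntegral ρ a c + liminfIntegral ρ c b) := by
        simp only [Φ]; ring
      _ ≤ Φ a b := by
        dsimp only [Φ]
        gcongr <;> exact liminfIntegral_add_liminfIntegral_le hac hcb
  have hloc : ∀ a ∈ Icc s t, ∀ b ∈ Icc s t, a ∉ N → b ∉ N → a < b → b - a ≤ δ →
      edist (f a • g a) (f b • g b) ≤ Φ a b := fun a ha b hb haN hbN hab hδab =>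
    (edist_smul_le_liminfIntegral_add hf hf0 hT hderiv hN
      (hg.mono (Icc_subset_Icc ha.1 hb.2)) haN hbN hab).trans (by dsimp only [Φ]; gcongr)
  calc edist (f a • g a) (f b • g b) ≤ Φ a b :=
        edist_le_of_superadditive hN hδ hΦ hloc ha hb haN hbN hab
    _ ≤ liminfIntegral (leibnizSeq f g ρ L T) a b +
          2 * L * ENNReal.ofReal δ * liminfIntegral ρ s t := by
        dsimp only [Φ]
        gcongr
        exact liminfIntegral_mono_set (Icc_subset_Icc ha.1 hb.2)
    _ = _ := by ring

lemma edist_smul_le_of_ne_zero (hf : LipschitzWith L f) (hf0 : ∀ x, 0 ≤ f x)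
    (hT : MeasurableSet T) (hderiv : ∀ x ∉ T, deriv f x = 0) (hN : volume N = 0)
    (hg : HasLiminfBound g ρ N a b) (hpos : ∀ r ∈ Icc a b, f r ≠ 0)
    (hΛ : liminfIntegral (leibnizSeq f g ρ L T) a b ≠ ∞) (haN : a ∉ N) (hbN : b ∉ N)
    (hab : a < b) :
    edist (f a • g a) (f b • g b) ≤ liminfIntegral (leibnizSeq f g ρ L T) a b := by
  obtain ⟨r₀, hr₀, hmin⟩ := isCompact_Icc.exists_isMinOn (nonempty_Icc.2 hab.le)
    hf.continuous.continuousOn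
  have hD : ENNReal.ofReal (f r₀) * liminfIntegral ρ a b ≠ ∞ := ne_top_of_le_ne_top hΛ
    (le_self_add.trans (ofReal_mul_liminfIntegral_add_le fun r hr => hmin hr))
  refine edist_smul_le_of_liminfIntegral_ne_top hf hf0 hT hderiv hN hg ?_
    (left_mem_Icc.2 hab.le) (right_mem_Icc.2 hab.le) haN hbN hab
  intro hD'
  rw [hD', ENNReal.mul_top (by simpa using (hf0 r₀).lt_of_ne (hpos r₀ hr₀).symm)] at hD
  exact hD rfl

lemma enorm_smul_le_ofReal_mul_indicator (hf : LipschitzWith L f) (hf0 : ∀ x, 0 ≤ f x)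
    {th : ℝ} (hth : ∀ x, 0 < f x → f x < th → x ∈ T) {z δ r : ℝ} (hz : f z = 0)
    (hLδ : L * δ < th) (hr : |r - z| ≤ δ) :
    ‖f r • g r‖ₑ ≤ ENNReal.ofReal δ * T.indicator (fun r => (L : ℝ≥0∞) * ‖g r‖ₑ) r := by
  have hfr : f r ≤ L * δ := by
    have := hf.dist_le_mul r z
    rw [Real.dist_eq, Real.dist_eq, hz, sub_zero, abs_of_nonneg (hf0 r)] at this
    exact this.trans (by gcongr)
  rcases (hf0 r).eq_or_lt with hr0 | hr0
  · simp [← hr0]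
  rw [indicator_of_mem (hth r hr0 (hfr.trans_lt hLδ)), enorm_smul, Real.enorm_of_nonneg (hf0 r),
    ← mul_assoc, ← ENNReal.ofReal_coe_nnreal, ← ENNReal.ofReal_mul ((abs_nonneg _).trans hr),
    mul_comm δ]
  gcongr

/-- For small `δ`, on `J = [c, c + δ/2] ⊆ [z - δ, z + δ]` the values of `f` are positive only
below the threshold, hence only on `T`, so `‖f • g‖ ≤ δ G` with `G = 1_T L ‖g‖`. As `∫ G` over
`[z - δ, z + δ]` is eventually below `ε/2`, the mean of `‖f • g‖` over `J` is below `ε`. -/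
lemma eventually_exists_enorm_smul_le (hf : LipschitzWith L f) (hf0 : ∀ x, 0 ≤ f x)
    (hth : ∃ th > 0, ∀ x, 0 < f x → f x < th → x ∈ T) (hN : volume N = 0)
    (hG : ∫⁻ r in Icc a b, T.indicator (fun r => (L : ℝ≥0∞) * ‖g r‖ₑ) r ≠ ∞) {z : ℝ}
    (hz : f z = 0) {ε : ℝ≥0∞} (hε : ε ≠ 0) :
    ∀ᶠ δ in 𝓝[>] (0 : ℝ), ∀ c ∈ Icc (z - δ) (z + δ / 2), Icc c (c + δ / 2) ⊆ Icc a b →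
      ∃ r ∈ Icc c (c + δ / 2), r ∉ N ∧ ‖f r • g r‖ₑ ≤ ε := by
  obtain ⟨th, hth0, hth⟩ := hth
  set G := T.indicator (fun r => (L : ℝ≥0∞) * ‖g r‖ₑ)
  have hsmall := (tendsto_setLIntegral_zero hG (tendsto_restrict_volume_Icc_sub_add _ z)).eventually
    (gt_mem_nhds (ENNReal.half_pos hε))
  have hLδ : ∀ᶠ δ in 𝓝[>] (0 : ℝ), L * δ < th :=
    ((continuous_const.mul continuous_id).tendsto' 0 0 (by simp) |>.eventually
      (gt_mem_nhds hth0)).filter_mono nhdsWithin_le_nhds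
  filter_upwards [hsmall, hLδ, self_mem_nhdsWithin] with δ hδε hLδ (hδ : 0 < δ) c hc hJ
  by_contra! hbig
  set J := Icc c (c + δ / 2)
  have hJz : J ⊆ Icc (z - δ) (z + δ) := Icc_subset_Icc hc.1 (by linarith [hc.2])
  have hlow : ε * ENNReal.ofReal (δ / 2) ≤ ∫⁻ r in J, ‖f r • g r‖ₑ :=
    calc ε * ENNReal.ofReal (δ / 2) = ∫⁻ _ in J, ε := by
          rw [setLIntegral_const, Real.volume_Icc]; ring_nf
      _ ≤ ∫⁻ r in J, ‖f r • g r‖ₑ := by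
          refine lintegral_mono_ae ?_
          filter_upwards [ae_restrict_mem measurableSet_Icc,
            ae_restrict_of_ae (measure_eq_zero_iff_ae_notMem.1 hN)] with r hrJ hrN
          exact (hbig r hrJ hrN).le
  have hup : ∫⁻ r in J, ‖f r • g r‖ₑ < ε * ENNReal.ofReal (δ / 2) :=
    calc ∫⁻ r in J, ‖f r • g r‖ₑ ≤ ∫⁻ r in J, ENNReal.ofReal δ * G r :=
          setLIntegral_mono' measurableSet_Icc fun r hr =>
            enorm_smul_le_ofReal_mul_indicator hf hf0 hth hz hLδ
              (abs_le.2 ⟨by linarith [(hJz hr).1], by linarith [(hJz hr).2]⟩)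
      _ ≤ ENNReal.ofReal δ * ∫⁻ r in Icc (z - δ) (z + δ), G r ∂volume.restrict (Icc a b) := by
          rw [lintegral_const_mul' _ _ ENNReal.ofReal_ne_top,
            Measure.restrict_restrict measurableSet_Icc]
          gcongr
          exact subset_inter hJz hJ
      _ < ENNReal.ofReal δ * (ε / 2) :=
          ENNReal.mul_lt_mul_right (by simpa using hδ) ENNReal.ofReal_ne_top hδε
      _ = ε * ENNReal.ofReal (δ / 2) := by
          rw [show δ = 2 * (δ / 2) by ring, ENNReal.ofReal_mul zero_le_two, ENNReal.ofReal_ofNat,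
            mul_comm (2 : ℝ≥0∞), mul_assoc,
            ENNReal.mul_div_cancel two_ne_zero ENNReal.ofNat_ne_top, mul_comm,
            mul_div_cancel_left₀ _ two_ne_zero]
  exact (hlow.trans_lt hup).false

lemma enorm_smul_le_liminfIntegral_add_of_left (hf : LipschitzWith L f) (hf0 : ∀ x, 0 ≤ f x)
    (hT : MeasurableSet T) (hderiv : ∀ x ∉ T, deriv f x = 0)
    (hth : ∃ th > 0, ∀ x, 0 < f x → f x < th → x ∈ T) (hN : volume N = 0)
    (hg : HasLiminfBound g ρ N a b) (haN : a ∉ N) {z : ℝ} (haz : a ≤ z) (hzb : z ≤ b)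
    (hz : f z = 0) (hpos : ∀ r ∈ Ico a z, f r ≠ 0)
    (hΛ : liminfIntegral (leibnizSeq f g ρ L T) a b ≠ ∞) {ε : ℝ≥0∞} (hε : ε ≠ 0) :
    ‖f a • g a‖ₑ ≤ liminfIntegral (leibnizSeq f g ρ L T) a z + ε := by
  rcases haz.eq_or_lt with rfl | haz
  · simp [hz]
  obtain ⟨δ, hnear, hδ, hδz⟩ := ((eventually_exists_enorm_smul_le hf hf0 hth hN
    (setLIntegral_indicator_ne_top hf0 hΛ) hz hε).and (Ioo_mem_nhdsGT (sub_pos.2 haz))).exists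
  obtain ⟨r, hr, hrN, hrε⟩ := hnear (z - δ) ⟨le_rfl, by linarith⟩
    (Icc_subset_Icc (by linarith) (by linarith))
  have har : a < r := by linarith [hr.1]
  have hrz : r < z := by linarith [hr.2]
  have har_sub : Icc a r ⊆ Icc a b := Icc_subset_Icc le_rfl (by linarith)
  calc ‖f a • g a‖ₑ ≤ edist (f a • g a) (f r • g r) + ‖f r • g r‖ₑ := by
        simpa only [edist_zero_right] using edist_triangle (f a • g a) (f r • g r) 0
    _ ≤ liminfIntegral (leibnizSeq f g ρ L T) a z + ε := by
        gcongr
        refine (edist_smul_le_of_ne_zero hf hf0 hT hderiv hN (hg.mono har_sub)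
          (fun x hx => hpos x ⟨hx.1, hx.2.trans_lt hrz⟩)
          (ne_top_of_le_ne_top hΛ (liminfIntegral_mono_set har_sub)) haN hrN har).trans
          (liminfIntegral_mono_set (Icc_subset_Icc le_rfl hrz.le))

lemma enorm_smul_le_liminfIntegral_add_of_right (hf : LipschitzWith L f) (hf0 : ∀ x, 0 ≤ f x)
    (hT : MeasurableSet T) (hderiv : ∀ x ∉ T, deriv f x = 0)
    (hth : ∃ th > 0, ∀ x, 0 < f x → f x < th → x ∈ T) (hN : volume N = 0)
    (hg : HasLiminfBound g ρ N a b) (hbN : b ∉ N) {z : ℝ} (haz : a ≤ z) (hzb : z ≤ b)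
    (hz : f z = 0) (hpos : ∀ r ∈ Ioc z b, f r ≠ 0)
    (hΛ : liminfIntegral (leibnizSeq f g ρ L T) a b ≠ ∞) {ε : ℝ≥0∞} (hε : ε ≠ 0) :
    ‖f b • g b‖ₑ ≤ liminfIntegral (leibnizSeq f g ρ L T) z b + ε := by
  rcases hzb.eq_or_lt with rfl | hzb
  · simp [hz]
  obtain ⟨δ, hnear, hδ, hδz⟩ := ((eventually_exists_enorm_smul_le hf hf0 hth hN
    (setLIntegral_indicator_ne_top hf0 hΛ) hz hε).and (Ioo_mem_nhdsGT (sub_pos.2 hzb))).exists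
  obtain ⟨r, hr, hrN, hrε⟩ := hnear (z + δ / 2) ⟨by linarith, le_rfl⟩
    (Icc_subset_Icc (by linarith) (by linarith))
  have hrb : r < b := by linarith [hr.2]
  have hzr : z < r := by linarith [hr.1]
  have hrb_sub : Icc r b ⊆ Icc a b := Icc_subset_Icc (by linarith) le_rfl
  calc ‖f b • g b‖ₑ ≤ edist (f r • g r) (f b • g b) + ‖f r • g r‖ₑ := by
        rw [edist_comm, ← edist_zero_right, ← edist_zero_right]
        exact edist_triangle _ _ _
    _ ≤ liminfIntegral (leibnizSeq f g ρ L T) z b + ε := by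
        gcongr
        refine (edist_smul_le_of_ne_zero hf hf0 hT hderiv hN (hg.mono hrb_sub)
          (fun x hx => hpos x ⟨hzr.trans_le hx.1, hx.2⟩)
          (ne_top_of_le_ne_top hΛ (liminfIntegral_mono_set hrb_sub)) hrN hbN hrb).trans
          (liminfIntegral_mono_set (Icc_subset_Icc hzr.le le_rfl))

lemma edist_smul_le_liminfIntegral (hf : LipschitzWith L f) (hf0 : ∀ x, 0 ≤ f x)
    (hT : MeasurableSet T) (hderiv : ∀ x ∉ T, deriv f x = 0)
    (hth : ∃ th > 0, ∀ x, 0 < f x → f x < th → x ∈ T) (hN : volume N = 0)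
    (hg : HasLiminfBound g ρ N a b) (haN : a ∉ N) (hbN : b ∉ N) (hab : a < b) :
    edist (f a • g a) (f b • g b) ≤ liminfIntegral (leibnizSeq f g ρ L T) a b := by
  set Λ := liminfIntegral (leibnizSeq f g ρ L T)
  by_cases hΛ : Λ a b = ∞
  · simp [hΛ]
  by_cases hpos : ∀ r ∈ Icc a b, f r ≠ 0
  · exact edist_smul_le_of_ne_zero hf hf0 hT hderiv hN hg hpos hΛ haN hbN hab
  push Not at hpos
  have hZ : IsCompact (Icc a b ∩ f ⁻¹' {0}) :=
    isCompact_Icc.inter_right (isClosed_singleton.preimage hf.continuous)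
  obtain ⟨z₁, ⟨hz₁, hfz₁⟩, hz₁min⟩ := hZ.exists_isLeast hpos
  obtain ⟨z₂, ⟨hz₂, hfz₂⟩, hz₂max⟩ := hZ.exists_isGreatest hpos
  refine ENNReal.le_of_forall_pos_le_add fun ε hε _ => ?_
  have hε2 : (ε / 2 : ℝ≥0∞) ≠ 0 := (ENNReal.half_pos (by simpa using hε.ne')).ne'
  have hleft := enorm_smul_le_liminfIntegral_add_of_left hf hf0 hT hderiv hth hN hg haN
    hz₁.1 hz₁.2 hfz₁ (fun r hr h0 => hr.2.not_ge (hz₁min ⟨⟨hr.1, hr.2.le.trans hz₁.2⟩, h0⟩))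
    hΛ hε2
  have hright := enorm_smul_le_liminfIntegral_add_of_right hf hf0 hT hderiv hth hN hg hbN
    hz₂.1 hz₂.2 hfz₂ (fun r hr h0 => hr.1.not_ge (hz₂max ⟨⟨hz₂.1.trans hr.1.le, hr.2⟩, h0⟩))
    hΛ hε2
  calc edist (f a • g a) (f b • g b) ≤ ‖f a • g a‖ₑ + ‖f b • g b‖ₑ := by
        simpa only [edist_zero_right, edist_comm (0 : V)] using
          edist_triangle (f a • g a) 0 (f b • g b)
    _ ≤ (Λ a z₁ + ε / 2) + (Λ z₂ b + ε / 2) := add_le_add hleft hright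
    _ ≤ (Λ a z₁ + Λ z₁ b) + (ε / 2 + ε / 2) := by
        rw [add_add_add_comm]
        gcongr
        exact liminfIntegral_mono_set (Icc_subset_Icc (hz₁min ⟨hz₂, hfz₂⟩) le_rfl)
    _ ≤ Λ a b + ε := by
        rw [ENNReal.add_halves]
        gcongr
        exact liminfIntegral_add_liminfIntegral_le hz₁.1 hz₁.2

theorem HasLiminfBound.smul (hf : LipschitzWith L f) (hf0 : ∀ x, 0 ≤ f x) {W : Set ℝ} {c : ℝ}
    (hW : IsOpen W) (hfW : ∀ x ∈ W, f x = c) (hT : MeasurableSet T)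
    (hcover : ∀ x ∉ T, x ∈ W ∨ f x = 0) (hN : volume N = 0) (hg : HasLiminfBound g ρ N s t) :
    HasLiminfBound (fun r => f r • g r) (leibnizSeq f g ρ L T) N s t :=
  fun _ _ ha hb haN hbN hab => edist_smul_le_liminfIntegral hf hf0 hT
    (deriv_eq_zero_of_notMem hf0 hW hfW hcover) (exists_pos_forall_mem_of_pos_of_lt hfW hcover)
    hN (hg.mono (Icc_subset_Icc ha.1 hb.2)) haN hbN hab

end Leibniz

namespace Curve
variable {X : Type*} [MetricSpace X] (γ : Curve X)

def extend : ℝ → X := fun r => γ.toFun (projIcc 0 γ.len γ.len_pos.le r)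

lemma extend_of_mem {r : ℝ} (hr : r ∈ Icc 0 γ.len) : γ.extend r = γ.toFun r := by
  simp [extend, projIcc_of_mem _ hr]

lemma lipschitzWith_extend : LipschitzWith 1 γ.extend := by
  have h := γ.lip.to_restrict.comp (LipschitzWith.projIcc γ.len_pos.le)
  rwa [one_mul] at h

lemma hasLiminfBound_extend_iff {E : Type*} [PseudoEMetricSpace E] (g : X → E)
    (ρ : ℕ → X → ℝ≥0∞) (N : Set ℝ) :
    HasLiminfBound (g ∘ γ.extend) (fun i => ρ i ∘ γ.extend) N 0 γ.len ↔
      ∀ s t : ℝ, s ∈ Icc 0 γ.len → t ∈ Icc 0 γ.len → s ∉ N → t ∉ N → s < t →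
        edist (g (γ.toFun s)) (g (γ.toFun t)) ≤
          atTop.liminf fun i => γ.integralOn s t (ρ i) := by
  refine forall₄_congr fun s t hs ht => ?_
  have hint : (fun i => ∫⁻ r in Icc s t, ρ i (γ.extend r)) = fun i => γ.integralOn s t (ρ i) :=
    funext fun i => setLIntegral_congr_fun measurableSet_Icc fun r hr => by
      rw [γ.extend_of_mem ⟨hs.1.trans hr.1, hr.2.trans ht.2⟩]
  simp only [liminfIntegral, hint, Function.comp_apply, γ.extend_of_mem hs, γ.extend_of_mem ht]

end Curve

theorem statement9_general {X : Type*} [MetricSpace X] [MeasurableSpace X] [BorelSpace X]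
    (μ : Measure X) {V : Type*} [NormedAddCommGroup V] [NormedSpace ℝ V]
    (u : X → V) (ρ : ℕ → X → ℝ≥0∞) (η : X → ℝ) (L : ℝ≥0) (U V₀ : Set X)
    (hρ : AMBounding μ u ρ)
    (humeas : Measurable fun x => (‖u x‖₊ : ℝ≥0∞))
    (hη : LipschitzWith L η) (hη0 : ∀ x, 0 ≤ η x)
    (hUmeas : MeasurableSet U)
    (hsupp : ∀ x ∉ U, η x = 0)
    (hV₀ : IsOpen V₀)
    (hconst : ∃ c : ℝ, ∀ x ∈ V₀, η x = c) :
    AMBounding μ (fun x => η x • u x)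
      (fun i x => ENNReal.ofReal (η x) * ρ i x +
        Set.indicator (U \ V₀) (fun x => (L : ℝ≥0∞) * (‖u x‖₊ : ℝ≥0∞)) x) := by
  show AMBounding μ (fun x => η x • u x) (leibnizSeq η u ρ L (U \ V₀))
  obtain ⟨hρm, Γ, hΓ, hΓρ⟩ := hρ
  obtain ⟨c, hc⟩ := hconst
  have hT : MeasurableSet (U \ V₀) := hUmeas.diff hV₀.measurableSet
  refine ⟨measurable_leibnizSeq hη.continuous.measurable humeas hρm hT, Γ, hΓ, fun γ hγ _ => ?_⟩
  obtain ⟨N, hN, hγN⟩ := hΓρ γ hγ fun _ _ => mem_univ _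
  have hf : LipschitzWith L (η ∘ γ.extend) := by simpa using hη.comp γ.lipschitzWith_extend
  refine ⟨N, hN, (γ.hasLiminfBound_extend_iff (fun x => η x • u x)
    (leibnizSeq η u ρ L (U \ V₀)) N).1 ?_⟩
  exact ((γ.hasLiminfBound_extend_iff u ρ N).2 hγN).smul hf (fun _ => hη0 _)
    (hV₀.preimage γ.lipschitzWith_extend.continuous) (fun x hx => hc _ hx)
    (γ.lipschitzWith_extend.continuous.measurable hT)
    (fun x hx => or_iff_not_imp_left.2 fun hV => hsupp _ fun hU => hx ⟨hU, hV⟩) hN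

/-- Leibniz rule for AM-bounding sequences: if `(ρ i)` is an AM-bounding sequence for `u`,
`η` is a nonnegative `L`-Lipschitz function supported in a bounded set `U` and constant on an
open set `V₀` compactly contained in `U`, then `(η ρ_i + L‖u‖χ_{U \ V₀})` is an AM-bounding
sequence for `η u`. -/
theorem statement9 {X : Type*} [MetricSpace X] [MeasurableSpace X] [BorelSpace X]
    (μ : Measure X) {V : Type*} [NormedAddCommGroup V] [NormedSpace ℝ V]
    (u : X → V) (ρ : ℕ → X → ℝ≥0∞) (η : X → ℝ) (L : ℝ≥0) (U V₀ : Set X)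
    (hρ : AMBounding μ u ρ)
    (humeas : Measurable fun x => (‖u x‖₊ : ℝ≥0∞))
    (hη : LipschitzWith L η) (hη0 : ∀ x, 0 ≤ η x)
    (hUbd : Bornology.IsBounded U) (hUmeas : MeasurableSet U)
    (hsupp : ∀ x ∉ U, η x = 0)
    (hV₀ : IsOpen V₀) (hV₀U : closure V₀ ⊆ U) (hV₀cpt : IsCompact (closure V₀))
    (hconst : ∃ c : ℝ, ∀ x ∈ V₀, η x = c) :
    AMBounding μ (fun x => η x • u x)
      (fun i x => ENNReal.ofReal (η x) * ρ i x +
        Set.indicator (U \ V₀) (fun x => (L : ℝ≥0∞) * (‖u x‖₊ : ℝ≥0∞)) x) :=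
  statement9_general μ u ρ η L U V₀ hρ humeas hη hη0 hUmeas hsupp hV₀ hconst

end BVAMPaper
end
end

section
/- Let u : X → Y be measurable, Y a complete separable metric space. The following are equivalent: (a) there exists a sequence (ρ_i) of nonnegative Borel functions with sup_i ∫_X ρ_i dμ < ∞ bounding d_Y(u(γ(s)), u(γ(t))) ≤ liminf_i ∫_{γ|[s,t]} ρ_i ds along AM-a.e. curve outside an H¹-null parameter set; (b) for every Banach space V and isometric embedding Φ : Y → V, Φ∘u ∈ BV_AM(X:V); (c) there exists some Banach space V and isometric embedding Φ : Y → V with Φ∘u ∈ BV_AM(X:V). Moreover, in this case ‖D_AM(Φ∘u)‖(X) equals the infimum over all sequences satisfying (a) of liminf_i ∫_X ρ_i dμ. -/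
open MeasureTheory Filter Set Metric
open scoped ENNReal NNReal Topology

noncomputable section

namespace BVAMPaper

variable {X : Type*} [MetricSpace X]

variable [MeasurableSpace X]

/-!
An AM-bounding sequence for `u` only involves the distances `d_Y(u(γ s), u(γ t))`, so it is
also one for `Φ ∘ u` whenever `Φ` is an isometric embedding, and conversely; this gives the
equivalence of (b) and (c) with the intrinsic condition, and the Kuratowski embedding
`Y ↪ ℓ^∞` provides the Banach space needed to go back from (b). Passing to a subsequence keeps
a sequence AM-bounding and can only raise the liminf of its energies, so a sequence whose
energies have liminf below `L` has a subsequence with all energies at most `L`: bounding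
`sup_i ∫ ρ_i` rather than `liminf_i ∫ ρ_i` changes neither the class of maps nor the energy.
-/

theorem exists_strictMono_le_of_liminf_lt {α : Type*} [CompleteLinearOrder α] {f : ℕ → α}
    {L : α} (h : atTop.liminf f < L) : ∃ φ : ℕ → ℕ, StrictMono φ ∧ ∀ i, f (φ i) ≤ L := by
  obtain ⟨φ, hφ, hlt⟩ := extraction_of_frequently_atTop (frequently_lt_of_liminf_lt (h := h))
  exact ⟨φ, hφ, fun i => (hlt i).le⟩

theorem liminf_atTop_le_iSup {α : Type*} [CompleteLattice α] (f : ℕ → α) :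
    atTop.liminf f ≤ ⨆ i, f i :=
  (liminf_le_limsup (f := atTop)).trans limsup_le_iSup

section AMBounding

variable {μ : Measure X} {Y : Type*} [EMetricSpace Y] {u : X → Y} {ρ : ℕ → X → ℝ≥0∞}

section Isometry

variable {V : Type*} [EMetricSpace V] {Φ : Y → V}

theorem amBoundingOn_comp_isometry_iff (hΦ : Isometry Φ) {U : Set X} :
    AMBoundingOn μ U (Φ ∘ u) ρ ↔ AMBoundingOn μ U u ρ := by
  simp only [AMBoundingOn, Function.comp_apply, hΦ.edist_eq]

theorem amBounding_comp_isometry_iff (hΦ : Isometry Φ) :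
    AMBounding μ (Φ ∘ u) ρ ↔ AMBounding μ u ρ :=
  amBoundingOn_comp_isometry_iff hΦ

theorem damOn_comp_isometry (hΦ : Isometry Φ) (U : Set X) :
    DAMOn μ (Φ ∘ u) U = DAMOn μ u U := by
  simp only [DAMOn, amBoundingOn_comp_isometry_iff hΦ]

theorem dam_comp_isometry (hΦ : Isometry Φ) : DAM μ (Φ ∘ u) = DAM μ u :=
  damOn_comp_isometry hΦ univ

end Isometry

theorem AMBoundingOn.comp_strictMono {U : Set X} (h : AMBoundingOn μ U u ρ) {φ : ℕ → ℕ}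
    (hφ : StrictMono φ) : AMBoundingOn μ U u (fun i => ρ (φ i)) := by
  obtain ⟨hmeas, Γ, hΓ, hbound⟩ := h
  refine ⟨fun i => hmeas (φ i), Γ, hΓ, fun γ hγ hγU => ?_⟩
  obtain ⟨N, hN, hbound⟩ := hbound γ hγ hγU
  exact ⟨N, hN, fun s t hs ht hsN htN hst => (hbound s t hs ht hsN htN hst).trans
    (hφ.tendsto_atTop.liminf_le_liminf_comp (u := fun i => Curve.integralOn γ s t (ρ i)))⟩

theorem AMBounding.exists_iSup_le (h : AMBounding μ u ρ) {L : ℝ≥0∞}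
    (hL : atTop.liminf (fun i => ∫⁻ x, ρ i x ∂μ) < L) :
    ∃ σ : ℕ → X → ℝ≥0∞, AMBounding μ u σ ∧ ⨆ i, ∫⁻ x, σ i x ∂μ ≤ L := by
  obtain ⟨φ, hφ, hφL⟩ := exists_strictMono_le_of_liminf_lt hL
  exact ⟨fun i => ρ (φ i), AMBoundingOn.comp_strictMono h hφ, iSup_le hφL⟩

theorem exists_amBounding_iSup_lt_top_iff :
    (∃ ρ : ℕ → X → ℝ≥0∞, AMBounding μ u ρ ∧ ⨆ i, ∫⁻ x, ρ i x ∂μ < ∞) ↔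
      ∃ ρ : ℕ → X → ℝ≥0∞, AMBounding μ u ρ ∧ atTop.liminf (fun i => ∫⁻ x, ρ i x ∂μ) < ∞ := by
  refine ⟨fun ⟨ρ, hρ, hsup⟩ => ⟨ρ, hρ, (liminf_atTop_le_iSup _).trans_lt hsup⟩,
    fun ⟨ρ, hρ, hlim⟩ => ?_⟩
  obtain ⟨L, hρL, hL⟩ := exists_between hlim
  obtain ⟨σ, hσ, hσL⟩ := hρ.exists_iSup_le hρL
  exact ⟨σ, hσ, hσL.trans_lt hL⟩

theorem dam_eq_iInf_amBounding :
    DAM μ u = ⨅ (ρ : ℕ → X → ℝ≥0∞) (_ : AMBounding μ u ρ),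
      atTop.liminf fun i => ∫⁻ x, ρ i x ∂μ := by
  simp only [DAM, DAMOn, AMBounding, Measure.restrict_univ]

theorem iInf_amBounding_iSup_lt_top_eq_dam :
    ⨅ (ρ : ℕ → X → ℝ≥0∞) (_ : AMBounding μ u ρ ∧ ⨆ i, ∫⁻ x, ρ i x ∂μ < ∞),
      atTop.liminf (fun i => ∫⁻ x, ρ i x ∂μ) = DAM μ u := by
  rw [dam_eq_iInf_amBounding]
  refine le_antisymm (le_of_forall_gt_imp_ge_of_dense fun c hc => ?_)
    (iInf₂_mono' fun ρ hρ => ⟨ρ, hρ.1, le_rfl⟩)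
  rcases eq_top_or_lt_top c with rfl | hc_top
  · exact le_top
  obtain ⟨ρ, hρ, hρc⟩ : ∃ ρ, AMBounding μ u ρ ∧ atTop.liminf (fun i => ∫⁻ x, ρ i x ∂μ) < c := by
    simpa only [iInf_lt_iff, exists_prop] using hc
  obtain ⟨σ, hσ, hσc⟩ := hρ.exists_iSup_le hρc
  exact (iInf₂_le σ ⟨hσ, hσc.trans_lt hc_top⟩).trans ((liminf_atTop_le_iSup _).trans hσc)

end AMBounding

theorem statement11_general {X : Type*} [MetricSpace X] [MeasurableSpace X] (μ : Measure X)
    {Y : Type} [MetricSpace Y] [TopologicalSpace.SeparableSpace Y]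
    (u : X → Y) :
    ((∃ ρ : ℕ → X → ℝ≥0∞, AMBounding μ u ρ ∧ (⨆ i, ∫⁻ x, ρ i x ∂μ) < ∞) ↔
      (∀ (V : Type) [NormedAddCommGroup V], ∀ Φ : Y → V, Isometry Φ →
        ∃ ρ : ℕ → X → ℝ≥0∞, AMBounding μ (Φ ∘ u) ρ ∧
          (Filter.atTop.liminf fun i => ∫⁻ x, ρ i x ∂μ) < ∞)) ∧
    ((∀ (V : Type) [NormedAddCommGroup V], ∀ Φ : Y → V, Isometry Φ →
        ∃ ρ : ℕ → X → ℝ≥0∞, AMBounding μ (Φ ∘ u) ρ ∧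
          (Filter.atTop.liminf fun i => ∫⁻ x, ρ i x ∂μ) < ∞) ↔
      (∃ (V : Type) (iV : NormedAddCommGroup V) (Φ : Y → V),
        @Isometry Y V _ (iV.toMetricSpace.toPseudoMetricSpace.toPseudoEMetricSpace) Φ ∧
        ∃ ρ : ℕ → X → ℝ≥0∞,
          @AMBounding X _ _ V (@MetricSpace.toEMetricSpace V iV.toMetricSpace)
            μ (Φ ∘ u) ρ ∧
          (Filter.atTop.liminf fun i => ∫⁻ x, ρ i x ∂μ) < ∞)) ∧
    (∀ (V : Type) [NormedAddCommGroup V], ∀ Φ : Y → V, Isometry Φ →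
      DAM μ (Φ ∘ u) =
        ⨅ (ρ : ℕ → X → ℝ≥0∞)
          (_ : AMBounding μ u ρ ∧ (⨆ i, ∫⁻ x, ρ i x ∂μ) < ∞),
          Filter.atTop.liminf fun i => ∫⁻ x, ρ i x ∂μ) := by
  have hcomp : ∀ (V : Type) [NormedAddCommGroup V] (Φ : Y → V), Isometry Φ →
      ((∃ ρ : ℕ → X → ℝ≥0∞, AMBounding μ (Φ ∘ u) ρ ∧
        (atTop.liminf fun i => ∫⁻ x, ρ i x ∂μ) < ∞) ↔
      ∃ ρ : ℕ → X → ℝ≥0∞, AMBounding μ u ρ ∧ (atTop.liminf fun i => ∫⁻ x, ρ i x ∂μ) < ∞) :=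
    fun V _ Φ hΦ => by simp only [amBounding_comp_isometry_iff hΦ]
  have hK := kuratowskiEmbedding.isometry Y
  refine ⟨?_, ?_, fun V _ Φ hΦ => ?_⟩
  · rw [exists_amBounding_iSup_lt_top_iff]
    exact ⟨fun h V _ Φ hΦ => (hcomp V Φ hΦ).2 h, fun h => (hcomp _ _ hK).1 (h _ _ hK)⟩
  · refine ⟨fun h => ⟨_, _, _, hK, h _ _ hK⟩, fun ⟨V, iV, Φ, hΦ, hΦu⟩ V' _ Φ' hΦ' => ?_⟩
    exact (hcomp V' Φ' hΦ').2 ((@hcomp V iV Φ hΦ).1 hΦu)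
  · rw [dam_comp_isometry hΦ, iInf_amBounding_iSup_lt_top_eq_dam]

/-- `u` post-composed with some isometric embedding into a Banach space is `BV_AM` iff this
holds for every such embedding iff `u` admits an intrinsic AM-bounding sequence with uniformly
bounded integrals; moreover the energies agree. -/
theorem statement11 {X : Type*} [MetricSpace X] [MeasurableSpace X] (μ : Measure X)
    {Y : Type} [MetricSpace Y] [CompleteSpace Y] [TopologicalSpace.SeparableSpace Y]
    (u : X → Y) :
    ((∃ ρ : ℕ → X → ℝ≥0∞, AMBounding μ u ρ ∧ (⨆ i, ∫⁻ x, ρ i x ∂μ) < ∞) ↔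
      (∀ (V : Type) [NormedAddCommGroup V], ∀ Φ : Y → V, Isometry Φ →
        ∃ ρ : ℕ → X → ℝ≥0∞, AMBounding μ (Φ ∘ u) ρ ∧
          (Filter.atTop.liminf fun i => ∫⁻ x, ρ i x ∂μ) < ∞)) ∧
    ((∀ (V : Type) [NormedAddCommGroup V], ∀ Φ : Y → V, Isometry Φ →
        ∃ ρ : ℕ → X → ℝ≥0∞, AMBounding μ (Φ ∘ u) ρ ∧
          (Filter.atTop.liminf fun i => ∫⁻ x, ρ i x ∂μ) < ∞) ↔
      (∃ (V : Type) (iV : NormedAddCommGroup V) (Φ : Y → V),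
        @Isometry Y V _ (iV.toMetricSpace.toPseudoMetricSpace.toPseudoEMetricSpace) Φ ∧
        ∃ ρ : ℕ → X → ℝ≥0∞,
          @AMBounding X _ _ V (@MetricSpace.toEMetricSpace V iV.toMetricSpace)
            μ (Φ ∘ u) ρ ∧
          (Filter.atTop.liminf fun i => ∫⁻ x, ρ i x ∂μ) < ∞)) ∧
    (∀ (V : Type) [NormedAddCommGroup V], ∀ Φ : Y → V, Isometry Φ →
      DAM μ (Φ ∘ u) =
        ⨅ (ρ : ℕ → X → ℝ≥0∞)
          (_ : AMBounding μ u ρ ∧ (⨆ i, ∫⁻ x, ρ i x ∂μ) < ∞),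
          Filter.atTop.liminf fun i => ∫⁻ x, ρ i x ∂μ) :=
  statement11_general μ u

end BVAMPaper
end
end

section
/- There exists a map u : [-1,1] → {0,1} (namely u = χ_{[0,1]}) that lies in BV_AM([-1,1] : {0,1}) with the strong bounding sequence ρ_i = i·χ_{[-1/i,0]}, but u ∉ BV([-1,1] : {0,1}): u cannot be approximated in L¹ by maps in N^{1,1}([-1,1] : {0,1}). -/
open MeasureTheory Filter Set Metric
open scoped ENNReal NNReal Topology

noncomputable section

namespace BVAMPaper

variable {X : Type*} [MetricSpace X]

variable [MeasurableSpace X]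

/-- The domain `[-1,1]` with Lebesgue measure. -/
def I13 : Type := Set.Icc (-1 : ℝ) 1

instance : MetricSpace I13 := by unfold I13; infer_instance
instance : MeasurableSpace I13 := by unfold I13; infer_instance

def μ13 : Measure I13 := Measure.comap Subtype.val volume

/-- The target `{0,1} ⊂ ℝ`. -/
def Y13 : Type := ({0, 1} : Set ℝ)

instance : MetricSpace Y13 := by unfold Y13; infer_instance

/-- `u = χ_{[0,1]}`, viewed as a map `[-1,1] → {0,1}`. -/
def u13 : I13 → Y13 := fun x =>
  if (0 : ℝ) ≤ (show Set.Icc (-1:ℝ) 1 from x).1 then ⟨1, by simp⟩ else ⟨0, by simp⟩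

/-- `ρ_i = i · χ_{[-1/i, 0]}`. -/
def ρ13 : ℕ → I13 → ℝ≥0∞ := fun i x =>
  if -(1 / (i : ℝ)) ≤ (show Set.Icc (-1:ℝ) 1 from x).1 ∧
      (show Set.Icc (-1:ℝ) 1 from x).1 ≤ 0 then (i : ℝ≥0∞) else 0

/-!
Along any arclength-parametrized curve `γ`, the real coordinate `r ↦ γ(r)` is 1-Lipschitz. If
`u(γ s) ≠ u(γ t)`, this coordinate takes a negative and a nonnegative value on `[s, t]`, so for
large `i` it covers `[-1/i, 0]` (intermediate value theorem) and, being 1-Lipschitz, spends time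
at least `1/i` there; hence `∫_s^t ρ_i(γ) ≥ i · 1/i = 1`. Together with `∫ ρ_i = 1`, this puts
`u` in `BV_AM` with no exceptional curves at all.

Conversely, an integrable upper gradient `g` of `w : [-1,1] → {0,1}` bounds `d(w x, w y)` by the
integral of `g` over `[x, y]`, which tends to `0` as `y → x`. So `w` is continuous, hence
constant on the connected interval, and a constant is at `L¹`-distance `≥ 1` from `u`, because
`u` takes each of its two values on a set of measure `1`.
-/

theorem AM_empty (μ : Measure X) : AM μ (∅ : Set (Curve X)) = 0 := by
  refine le_antisymm ?_ bot_le
  have hadm : AMAdmissible (∅ : Set (Curve X)) fun _ _ => 0 :=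
    ⟨fun _ => measurable_const, fun _ h => absurd h (notMem_empty _)⟩
  exact (iInf₂_le _ hadm).trans (by simp)

section
variable {Y : Type*} [EMetricSpace Y]

theorem StrongBounding.amBounding {u : X → Y} {ρ : ℕ → X → ℝ≥0∞} (h : StrongBounding u ρ)
    (μ : Measure X) : AMBounding μ u ρ :=
  ⟨h.1, ∅, AM_empty μ, fun γ _ _ => h.2 γ⟩

theorem memL1_of_edist_le {α : Type*} [MeasurableSpace α] {μ : Measure α} [IsFiniteMeasure μ]
    {u : α → Y} (hu : AEStronglyMeasurable u μ) {y₀ : Y} {C : ℝ≥0∞} (hC : C ≠ ∞)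
    (h : ∀ x, edist (u x) y₀ ≤ C) : MemL1 μ u :=
  ⟨hu, y₀, (lintegral_mono h).trans_lt <| by
    simpa using ENNReal.mul_lt_top hC.lt_top (measure_lt_top μ univ)⟩

end

end BVAMPaper

theorem LipschitzOnWith.volume_le_volume_inter_preimage {K : ℝ≥0} {f : ℝ → ℝ} {s T : Set ℝ}
    (hf : LipschitzOnWith K f s) (hT : T ⊆ f '' s) : volume T ≤ K * volume (s ∩ f ⁻¹' T) := by
  have hTimage : f '' (s ∩ f ⁻¹' T) = T := by rw [image_inter_preimage, inter_eq_right.2 hT]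
  have := (hf.mono (inter_subset_left (t := f ⁻¹' T))).hausdorffMeasure_image_le zero_le_one
  rwa [hTimage, hausdorffMeasure_real, ENNReal.rpow_one] at this

theorem ENNReal.natCast_mul_ofReal_one_div {n : ℕ} (hn : n ≠ 0) :
    (n : ℝ≥0∞) * ENNReal.ofReal (1 / n) = 1 := by
  rw [one_div, ENNReal.ofReal_inv_of_pos (by positivity), ENNReal.ofReal_natCast,
    ENNReal.mul_inv_cancel (by exact_mod_cast hn) (ENNReal.natCast_ne_top n)]

namespace BVAMPaper

theorem μ13_apply (s : Set I13) : μ13 s = volume (Subtype.val '' s) :=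
  (MeasurableEmbedding.subtype_coe measurableSet_Icc).comap_apply volume s

instance : IsFiniteMeasure μ13 :=
  ⟨by
    rw [μ13_apply]
    exact (measure_mono (image_subset_iff.2 fun x _ => x.2)).trans_lt measure_Icc_lt_top⟩

theorem μ13_preimage_val (t : Set ℝ) : μ13 (Subtype.val ⁻¹' t) = volume (Icc (-1) 1 ∩ t) := by
  rw [μ13_apply]
  exact congrArg volume (Subtype.image_preimage_coe _ t)

def projI13 (r : ℝ) : I13 := projIcc (-1) 1 (by norm_num) r

@[simp] theorem projI13_val (x : I13) : projI13 x.1 = x := projIcc_val _ x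

theorem setLIntegral_μ13 (g : I13 → ℝ≥0∞) (t : Set I13) :
    ∫⁻ x in t, g x ∂μ13 = ∫⁻ r in Subtype.val '' t, g (projI13 r) := by
  refine (lintegral_congr fun x => ?_).trans
    (setLIntegral_subtype measurableSet_Icc t fun r => g (projI13 r))
  rw [projI13_val]

instance : PreconnectedSpace I13 := Subtype.preconnectedSpace isPreconnected_Icc

theorem measurable_ρ13 (i : ℕ) : Measurable (ρ13 i) :=
  Measurable.ite (measurable_subtype_coe (t := Icc (-(1 / (i : ℝ))) 0) measurableSet_Icc)
    measurable_const measurable_const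

theorem Y13.val_eq_zero_or_eq_one (y : Y13) : y.1 = 0 ∨ y.1 = 1 := y.2

theorem Y13.edist_eq_one_of_ne {a b : Y13} (h : a ≠ b) : edist a b = 1 := by
  have hval : a.1 ≠ b.1 := fun h' => h (Subtype.ext h')
  rw [show edist a b = edist a.1 b.1 from rfl]
  rcases a.val_eq_zero_or_eq_one with ha | ha <;> rcases b.val_eq_zero_or_eq_one with hb | hb <;>
    simp_all [edist_dist, Real.dist_eq]

theorem Y13.edist_le_one (a b : Y13) : edist a b ≤ 1 := by
  by_cases h : a = b
  · simp [h]
  · exact (edist_eq_one_of_ne h).le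

instance : DiscreteTopology Y13 := by unfold Y13; infer_instance

theorem u13_eq_iff (x y : I13) : u13 x = u13 y ↔ (0 ≤ x.1 ↔ 0 ≤ y.1) := by
  by_cases hx : 0 ≤ x.1 <;> by_cases hy : 0 ≤ y.1 <;> simp [u13, Y13, hx, hy]

theorem one_le_integralOn_ρ13 (γ : Curve I13) {s t : ℝ} (hst : s ≤ t)
    (hsub : Icc s t ⊆ Icc 0 γ.len) {i : ℕ} (hi : i ≠ 0)
    (hcross : Icc (-(1 / (i : ℝ))) 0 ⊆ uIcc (γ.toFun s).1 (γ.toFun t).1) :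
    1 ≤ γ.integralOn s t (ρ13 i) := by
  set f : ℝ → ℝ := fun r => (γ.toFun r).1
  have hlip : LipschitzOnWith 1 f (Icc s t) := by
    have := (LipschitzWith.subtype_val _).comp_lipschitzOnWith (γ.lip.mono hsub)
    rwa [one_mul] at this
  set E := Icc s t ∩ f ⁻¹' Icc (-(1 / (i : ℝ))) 0
  have hE : MeasurableSet E :=
    (hlip.continuousOn.preimage_isClosed_of_isClosed isClosed_Icc isClosed_Icc).measurableSet
  have hEvol : ENNReal.ofReal (1 / i) ≤ volume E := by
    have hst' : uIcc s t ⊆ Icc s t := (uIcc_of_le hst).le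
    have hT : Icc (-(1 / (i : ℝ))) 0 ⊆ f '' Icc s t :=
      hcross.trans ((intermediate_value_uIcc (hlip.continuousOn.mono hst')).trans
        (image_mono hst'))
    simpa [E] using hlip.volume_le_volume_inter_preimage hT
  calc 1 = (i : ℝ≥0∞) * ENNReal.ofReal (1 / i) := (ENNReal.natCast_mul_ofReal_one_div hi).symm
    _ ≤ (i : ℝ≥0∞) * volume E := by gcongr
    _ = ∫⁻ _ in E, (i : ℝ≥0∞) := (setLIntegral_const _ _).symm
    _ ≤ ∫⁻ r in E, ρ13 i (γ.toFun r) := setLIntegral_mono' hE fun r hr => (if_pos hr.2).ge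
    _ ≤ γ.integralOn s t (ρ13 i) := lintegral_mono_set inter_subset_left

theorem strongBounding_u13_ρ13 : StrongBounding u13 ρ13 := by
  refine ⟨measurable_ρ13, fun γ => ⟨∅, measure_empty, fun s t hs ht _ _ hst => ?_⟩⟩
  by_cases hu : u13 (γ.toFun s) = u13 (γ.toFun t)
  · simp [hu]
  rw [Y13.edist_eq_one_of_ne hu]
  rw [u13_eq_iff] at hu
  have hsign : min (γ.toFun s).1 (γ.toFun t).1 < 0 ∧ 0 ≤ max (γ.toFun s).1 (γ.toFun t).1 := by
    rw [min_lt_iff, le_max_iff, ← not_le, ← not_le]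
    tauto
  have hlarge : ∀ᶠ i : ℕ in atTop, 1 ≤ γ.integralOn s t (ρ13 i) := by
    filter_upwards [eventually_ne_atTop 0,
      tendsto_one_div_atTop_nhds_zero_nat.eventually (gt_mem_nhds (neg_pos.2 hsign.1))]
      with i hi hsmall
    refine one_le_integralOn_ρ13 γ hst.le (Icc_subset_Icc hs.1 ht.2) hi ?_
    exact Icc_subset_Icc (by linarith) hsign.2
  exact le_liminf_of_le (by isBoundedDefault) hlarge

theorem memL1_u13 : MemL1 μ13 u13 :=
  memL1_of_edist_le
    (StronglyMeasurable.ite (measurable_subtype_coe measurableSet_Ici)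
      stronglyMeasurable_const stronglyMeasurable_const).aestronglyMeasurable
    (y₀ := ⟨0, by simp⟩) ENNReal.one_ne_top fun x => Y13.edist_le_one _ _

theorem lintegral_ρ13_le_one {i : ℕ} (hi : i ≠ 0) : ∫⁻ x, ρ13 i x ∂μ13 ≤ 1 := by
  set E := {x : I13 | x.1 ∈ Icc (-(1 / (i : ℝ))) 0}
  have hρ : ρ13 i = E.indicator fun _ => (i : ℝ≥0∞) := by
    ext x
    simp only [ρ13, indicator_apply, E, mem_ofPred_eq, mem_Icc]
  have hE : μ13 E ≤ ENNReal.ofReal (1 / i) := by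
    rw [μ13_apply]
    refine (measure_mono (image_subset_iff.2 fun x hx => hx)).trans ?_
    simp
  have hEm : MeasurableSet E := measurable_subtype_coe measurableSet_Icc
  rw [hρ, lintegral_indicator_const hEm]
  calc (i : ℝ≥0∞) * μ13 E ≤ i * ENNReal.ofReal (1 / i) := by gcongr
    _ = 1 := ENNReal.natCast_mul_ofReal_one_div hi

theorem memBVAM_u13 : MemBVAM μ13 u13 :=
  ⟨memL1_u13, ρ13, strongBounding_u13_ρ13.amBounding μ13,
    (liminf_le_of_frequently_le' ((eventually_ne_atTop 0).mono
      fun _ hi => lintegral_ρ13_le_one hi).frequently).trans_lt ENNReal.one_lt_top⟩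

def segment (a b : I13) (hab : a.1 < b.1) : Curve I13 where
  len := b.1 - a.1
  len_pos := sub_pos.2 hab
  toFun r := projI13 (a.1 + r)
  lip := by
    have := (LipschitzWith.projIcc (show (-1 : ℝ) ≤ 1 by norm_num)).comp
      (isometry_add_left a.1).lipschitz
    rw [mul_one] at this
    exact this.lipschitzOnWith
  nonconst := ⟨0, by simp [hab.le], b.1 - a.1, by simp [hab.le],
    by simpa using fun h : a = b => hab.ne (congrArg Subtype.val h)⟩

theorem segment_integral {a b : I13} (hab : a.1 < b.1) (g : I13 → ℝ≥0∞) :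
    (segment a b hab).integral g = ∫⁻ r in Icc a.1 b.1, g (projI13 r) := by
  have h := (measurePreserving_add_left volume a.1).setLIntegral_comp_emb
    (measurableEmbedding_addLeft a.1) (fun r => g (projI13 r)) (Icc 0 (b.1 - a.1))
  rwa [image_const_add_Icc, add_zero, add_sub_cancel] at h

section UpperGradient
variable {Y : Type*} [EMetricSpace Y] {w : I13 → Y} {g : I13 → ℝ≥0∞}

theorem IsUpperGradient.edist_le_lintegral_uIcc (hug : IsUpperGradient w g) (a b : I13) :
    edist (w a) (w b) ≤ ∫⁻ r in uIcc a.1 b.1, g (projI13 r) := by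
  wlog hab : a.1 ≤ b.1 generalizing a b
  · rw [edist_comm, uIcc_comm]
    exact this b a (le_of_not_ge hab)
  rcases hab.lt_or_eq with hab | hab
  · have h := hug (segment a b hab)
    simp only [segment, add_zero, add_sub_cancel, projI13_val] at h
    rw [edist_comm, uIcc_of_le hab.le, ← segment_integral hab]
    exact h
  · simp [Subtype.ext hab]

theorem IsUpperGradient.continuous (hug : IsUpperGradient w g) (hfin : ∫⁻ x, g x ∂μ13 ≠ ∞) :
    Continuous w := by
  refine continuous_iff_continuousAt.2 fun x => ?_
  set S : I13 → Set I13 := fun y => Subtype.val ⁻¹' uIcc y.1 x.1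
  have hS : Tendsto (μ13 ∘ S) (𝓝 x) (𝓝 0) := by
    refine tendsto_of_tendsto_of_tendsto_of_le_of_le tendsto_const_nhds
      (edist_self x ▸ tendsto_id.edist tendsto_const_nhds) (fun _ => zero_le) fun y => ?_
    rw [Function.comp_apply, μ13_apply]
    refine (measure_mono (image_preimage_subset _ _)).trans ?_
    rw [Real.volume_interval, edist_dist, abs_sub_comm]
    rfl
  have hbound : ∀ y, edist (w y) (w x) ≤ ∫⁻ z in S y, g z ∂μ13 := fun y => by
    have hSy : Subtype.val '' S y = uIcc y.1 x.1 :=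
      (Subtype.image_preimage_coe _ _).trans (inter_eq_right.2 (uIcc_subset_Icc y.2 x.2))
    rw [setLIntegral_μ13, hSy]
    exact hug.edist_le_lintegral_uIcc y x
  rw [ContinuousAt, tendsto_iff_edist_tendsto_0]
  exact tendsto_of_tendsto_of_tendsto_of_le_of_le tendsto_const_nhds
    (tendsto_setLIntegral_zero hfin hS) (fun _ => zero_le) hbound

end UpperGradient

theorem MemN11.apply_eq {w : I13 → Y13} (hw : MemN11 μ13 w) (x y : I13) : w x = w y :=
  let ⟨_, _, _, hug, hfin⟩ := hw
  PreconnectedSpace.constant inferInstance (hug.continuous hfin.ne)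

theorem one_le_lintegral_edist_u13 (c : Y13) : 1 ≤ ∫⁻ x, edist c (u13 x) ∂μ13 := by
  set S : Set I13 := Subtype.val ⁻¹' Ici 0
  have hS : MeasurableSet S := measurable_subtype_coe measurableSet_Ici
  have hμS : μ13 S = 1 := by
    rw [μ13_preimage_val, show Icc (-1 : ℝ) 1 ∩ Ici 0 = Icc 0 1 by ext; simp; grind]
    simp
  have hμSc : μ13 Sᶜ = 1 := by
    rw [show Sᶜ = (Subtype.val ⁻¹' Iio (0 : ℝ) : Set I13) by rw [← compl_Ici]; rfl,
      μ13_preimage_val, show Icc (-1 : ℝ) 1 ∩ Iio 0 = Ico (-1) 0 by ext; simp; grind]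
    simp
  set one : Y13 := ⟨1, by simp⟩
  set zero : Y13 := ⟨0, by simp⟩
  calc 1 = edist one zero := (Y13.edist_eq_one_of_ne (by simp [one, zero, Y13])).symm
    _ ≤ edist c one * μ13 S + edist c zero * μ13 Sᶜ := by
      rw [hμS, hμSc, mul_one, mul_one, edist_comm c]
      exact edist_triangle _ _ _
    _ = ∫⁻ x in S, edist c (u13 x) ∂μ13 + ∫⁻ x in Sᶜ, edist c (u13 x) ∂μ13 := by
      rw [← setLIntegral_const, ← setLIntegral_const]
      congr 1
      · exact setLIntegral_congr_fun hS fun x hx => congrArg (edist c) (if_pos hx).symm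
      · exact setLIntegral_congr_fun hS.compl fun x hx => congrArg (edist c) (if_neg hx).symm
    _ = ∫⁻ x, edist c (u13 x) ∂μ13 := lintegral_add_compl _ hS

theorem one_le_lintegral_edist_u13_of_memN11 {w : I13 → Y13} (hw : MemN11 μ13 w) :
    1 ≤ ∫⁻ x, edist (w x) (u13 x) ∂μ13 := by
  simpa only [hw.apply_eq _ (projI13 0)] using one_le_lintegral_edist_u13 (w (projI13 0))

/-- `u = χ_{[0,1]} : [-1,1] → {0,1}` lies in `BV_AM` with strong bounding sequence
`ρ_i = i·χ_{[-1/i,0]}`, but cannot be approximated in `L¹` by `N^{1,1}` maps, so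
`u ∉ BV([-1,1] : {0,1})`. -/
theorem statement13 :
    StrongBounding u13 ρ13 ∧ MemBVAM μ13 u13 ∧
      ¬ ∃ v : ℕ → I13 → Y13, (∀ k, MemN11 μ13 (v k)) ∧
        Tendsto (fun k => ∫⁻ x, edist (v k x) (u13 x) ∂μ13) atTop (nhds 0) := by
  refine ⟨strongBounding_u13_ρ13, memBVAM_u13, ?_⟩
  rintro ⟨v, hv, hlim⟩
  have h := ge_of_tendsto' hlim fun k => one_le_lintegral_edist_u13_of_memN11 (hv k)
  exact one_ne_zero (nonpos_iff_eq_zero.1 h)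

end BVAMPaper
end
end

section
/- Let μ be a doubling measure on X such that every singleton has measure zero, let C ≥ 1, B a ball of radius R in X, and z ∈ 4CB. Then ∫_B d(x,z)/μ(B(x,d(x,z))) dμ(x) ≤ C'' · μ(B) · R / μ(B), i.e. ∫_B d(x,z)/μ(B(x,d(x,z))) dμ(x) ≲ R, where the implicit constant depends only on C and the doubling constant of μ. -/
open MeasureTheory Filter Set Metric
open scoped ENNReal NNReal Topology

noncomputable section

namespace MeasureTheory

variable {α : Type*} [MeasurableSpace α] {μ : Measure α}

/-- Neither `s` nor `f` need be measurable: a simple function below `f` exceeds `g` only on a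
measurable set disjoint from `s`, which is null for `μ.restrict s`. -/
theorem setLIntegral_le_of_forall_mem_le {s : Set α} {f g : α → ℝ≥0∞} (hg : Measurable g)
    (hfg : ∀ x ∈ s, f x ≤ g x) : ∫⁻ x in s, f x ∂μ ≤ ∫⁻ x in s, g x ∂μ := by
  rw [lintegral]
  refine iSup₂_le fun φ hφ => ?_
  rw [← SimpleFunc.lintegral_eq_lintegral]
  refine lintegral_mono_ae (ae_iff.2 ?_)
  have hnull : {x | g x < φ x} ∩ s = ∅ :=
    eq_empty_of_forall_notMem fun x ⟨hlt, hx⟩ => (hlt.trans_le ((hφ x).trans (hfg x hx))).false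
  simp only [not_le]
  rw [Measure.restrict_apply (measurableSet_lt hg φ.measurable), hnull, measure_empty]

theorem setLIntegral_le_tsum_mul_measure_inter {ι : Type*} [Countable ι] {s : Set α}
    {f : α → ℝ≥0∞} (A : ι → Set α) (c : ι → ℝ≥0∞) (hcover : ∀ x ∈ s, f x ≠ 0 → ∃ i, x ∈ A i)
    (hle : ∀ i, ∀ x ∈ A i, f x ≤ c i) :
    ∫⁻ x in s, f x ∂μ ≤ ∑' i, c i * μ (A i ∩ s) := by
  set T : ι → Set α := fun i => toMeasurable μ (A i ∩ s)
  have hT : ∀ i, Measurable ((T i).indicator fun _ => c i) := fun i =>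
    measurable_const.indicator (measurableSet_toMeasurable _ _)
  calc ∫⁻ x in s, f x ∂μ ≤ ∫⁻ x in s, ∑' i, (T i).indicator (fun _ => c i) x ∂μ := by
        refine setLIntegral_le_of_forall_mem_le (Measurable.tsum hT) fun x hx => ?_
        rcases eq_or_ne (f x) 0 with h0 | h0
        · simp [h0]
        obtain ⟨i, hi⟩ := hcover x hx h0
        calc f x ≤ c i := hle i x hi
          _ = (T i).indicator (fun _ => c i) x :=
            (Set.indicator_of_mem (subset_toMeasurable μ (A i ∩ s) ⟨hi, hx⟩) (fun _ => c i)).symm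
          _ ≤ ∑' j, (T j).indicator (fun _ => c j) x := ENNReal.le_tsum i
    _ ≤ ∫⁻ x, ∑' i, (T i).indicator (fun _ => c i) x ∂μ := setLIntegral_le_lintegral _ _
    _ = ∑' i, c i * μ (A i ∩ s) := by
        rw [lintegral_tsum fun i => (hT i).aemeasurable]
        simp only [T, lintegral_indicator_const (measurableSet_toMeasurable _ _),
          measure_toMeasurable]

end MeasureTheory

namespace BVAMPaper

namespace Doubling

variable {X : Type*} [MetricSpace X] [MeasurableSpace X] {μ : Measure X} {Cd : ℝ≥0}

theorem measure_ball_two_pow_mul_le (hμ : Doubling μ Cd) (x : X) {r : ℝ} (hr : 0 < r)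
    (k : ℕ) : μ (ball x (2 ^ k * r)) ≤ Cd ^ k * μ (ball x r) := by
  induction k with
  | zero => simp
  | succ k ih =>
    calc μ (ball x (2 ^ (k + 1) * r)) = μ (ball x (2 * (2 ^ k * r))) := by ring_nf
      _ ≤ Cd * μ (ball x (2 ^ k * r)) := (hμ x _ (by positivity)).2.1
      _ ≤ Cd * (Cd ^ k * μ (ball x r)) := by gcongr
      _ = Cd ^ (k + 1) * μ (ball x r) := by ring

theorem measure_ball_le_pow_three_mul (hμ : Doubling μ Cd) {x z : X} {a : ℝ} (ha : 0 < a)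
    (hxz : dist x z ≤ a) : μ (ball z (2 * a)) ≤ Cd ^ 3 * μ (ball x (a / 2)) :=
  calc μ (ball z (2 * a)) ≤ μ (ball x (2 ^ 3 * (a / 2))) :=
        measure_mono (ball_subset_ball' (by rw [dist_comm]; linarith))
    _ ≤ Cd ^ 3 * μ (ball x (a / 2)) := hμ.measure_ball_two_pow_mul_le x (by positivity) 3

theorem edist_div_measure_ball_le (hμ : Doubling μ Cd) {x z : X} {a : ℝ}
    (hlo : a / 2 < dist x z) (hhi : dist x z ≤ a) :
    edist x z / μ (ball x (dist x z)) ≤ Cd ^ 3 * ENNReal.ofReal a / μ (ball z (2 * a)) := by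
  have ha : 0 < a := by linarith [dist_nonneg (x := x) (y := z)]
  have hcomp : μ (ball z (2 * a)) / (Cd ^ 3 : ℝ≥0∞) ≤ μ (ball x (dist x z)) :=
    ENNReal.div_le_of_le_mul ((hμ.measure_ball_le_pow_three_mul ha hhi).trans_eq (mul_comm _ _)
      |>.trans (mul_le_mul_left (measure_mono (ball_subset_ball hlo.le)) _))
  calc edist x z / μ (ball x (dist x z))
      ≤ ENNReal.ofReal a / (μ (ball z (2 * a)) / (Cd ^ 3 : ℝ≥0∞)) := by
        gcongr
        exact edist_dist x z ▸ ENNReal.ofReal_le_ofReal hhi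
    _ = Cd ^ 3 * ENNReal.ofReal a / μ (ball z (2 * a)) := by
        have hm0 : μ (ball z (2 * a)) ≠ 0 := (hμ z (2 * a) (by positivity)).1.ne'
        rw [div_eq_mul_inv, ENNReal.inv_div (Or.inl (by simp)) (Or.inr hm0), ← mul_div_assoc,
          mul_comm]

/-- Split `ball z ρ` into the dyadic annuli `ρ 2⁻ⁿ⁻¹ < d(x, z) ≤ ρ 2⁻ⁿ`: on the `n`-th one the
integrand is at most `Cd³ ρ 2⁻ⁿ / μ(ball z (2 ρ 2⁻ⁿ))` and the annulus lies in that ball, so the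
integral is bounded by the geometric series `∑ Cd³ ρ 2⁻ⁿ`. -/
theorem setLIntegral_edist_div_measure_ball_le (hμ : Doubling μ Cd) (z : X) {ρ : ℝ}
    {s : Set X} (hs : s ⊆ ball z ρ) :
    ∫⁻ x in s, edist x z / μ (ball x (dist x z)) ∂μ ≤ 2 * Cd ^ 3 * ENNReal.ofReal ρ := by
  set a : ℕ → ℝ := fun n => ρ * 2⁻¹ ^ n
  set A : ℕ → Set X := fun n => {x | a n / 2 < dist x z ∧ dist x z ≤ a n}
  have hcover : ∀ x ∈ s, edist x z / μ (ball x (dist x z)) ≠ 0 → ∃ n, x ∈ A n := by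
    intro x hx hne
    have hxz : 0 < dist x z := dist_pos.2 fun h => hne (by simp [h])
    have hρ : dist x z < ρ := hs hx
    obtain ⟨n, hlo, hhi⟩ := exists_nat_pow_near_of_lt_one (div_pos hxz (hxz.trans hρ))
      ((div_le_one (hxz.trans hρ)).2 hρ.le) (by norm_num : (0 : ℝ) < 2⁻¹) (by norm_num)
    rw [lt_div_iff₀ (hxz.trans hρ), pow_succ] at hlo
    rw [div_le_iff₀ (hxz.trans hρ)] at hhi
    exact ⟨n, show ρ * 2⁻¹ ^ n / 2 < dist x z by linarith,
      show dist x z ≤ ρ * 2⁻¹ ^ n by linarith⟩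
  have hterm : ∀ n, Cd ^ 3 * ENNReal.ofReal (a n) / μ (ball z (2 * a n)) * μ (A n ∩ s) ≤
      Cd ^ 3 * ENNReal.ofReal ρ * 2⁻¹ ^ n := by
    intro n
    have hA : A n ∩ s ⊆ ball z (2 * a n) := fun x ⟨⟨hlo, hhi⟩, _⟩ => by
      rw [mem_ball]; linarith [dist_nonneg (x := x) (y := z)]
    calc Cd ^ 3 * ENNReal.ofReal (a n) / μ (ball z (2 * a n)) * μ (A n ∩ s)
        ≤ μ (ball z (2 * a n)) * (Cd ^ 3 * ENNReal.ofReal (a n) / μ (ball z (2 * a n))) := by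
          rw [mul_comm]; gcongr
      _ ≤ Cd ^ 3 * ENNReal.ofReal (a n) := ENNReal.mul_div_le
      _ = Cd ^ 3 * ENNReal.ofReal ρ * 2⁻¹ ^ n := by
          rw [ENNReal.ofReal_mul' (by positivity), ENNReal.ofReal_pow (by norm_num),
            ENNReal.ofReal_inv_of_pos two_pos, ENNReal.ofReal_ofNat, mul_assoc]
  calc ∫⁻ x in s, edist x z / μ (ball x (dist x z)) ∂μ
      ≤ ∑' n, Cd ^ 3 * ENNReal.ofReal (a n) / μ (ball z (2 * a n)) * μ (A n ∩ s) :=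
        setLIntegral_le_tsum_mul_measure_inter A _ hcover
          fun n _ hx => hμ.edist_div_measure_ball_le hx.1 hx.2
    _ ≤ ∑' n, Cd ^ 3 * ENNReal.ofReal ρ * 2⁻¹ ^ n := ENNReal.tsum_le_tsum hterm
    _ = 2 * Cd ^ 3 * ENNReal.ofReal ρ := by
        rw [ENNReal.tsum_mul_left, ENNReal.tsum_geometric, ENNReal.one_sub_inv_two, inv_inv,
          mul_comm, ← mul_assoc]

end Doubling

theorem statement16_general (Cd C : ℝ≥0) :
    ∃ C'' : ℝ≥0, ∀ (X : Type) [MetricSpace X] [MeasurableSpace X] (μ : Measure X),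
      Doubling μ Cd → (∀ w : X, μ {w} = 0) →
      ∀ (x₀ z : X) (R : ℝ), 0 < R → z ∈ ball x₀ (4 * C * R) →
        ∫⁻ x in ball x₀ R, edist x z / μ (ball x (dist x z)) ∂μ ≤
          C'' * ENNReal.ofReal R := by
  refine ⟨2 * Cd ^ 3 * (1 + 4 * C), fun X _ _ μ hμ _ x₀ z R _ hz => ?_⟩
  have hsub : ball x₀ R ⊆ ball z ((1 + 4 * C : ℝ≥0) * R) := fun x hx => by
    rw [mem_ball, dist_comm] at hz
    rw [mem_ball] at hx ⊢
    push_cast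
    linarith [dist_triangle x x₀ z]
  calc ∫⁻ x in ball x₀ R, edist x z / μ (ball x (dist x z)) ∂μ
      ≤ 2 * Cd ^ 3 * ENNReal.ofReal ((1 + 4 * C : ℝ≥0) * R) :=
        hμ.setLIntegral_edist_div_measure_ball_le z hsub
    _ = ((2 * Cd ^ 3 * (1 + 4 * C) : ℝ≥0) : ℝ≥0∞) * ENNReal.ofReal R := by
        rw [ENNReal.ofReal_mul NNReal.zero_le_coe, ENNReal.ofReal_coe_nnreal]
        push_cast
        ring

/-- Riesz-potential estimate: for a doubling measure vanishing on singletons,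
`∫_B d(x,z)/μ(B(x,d(x,z))) dμ(x) ≲ R` for any `z ∈ 4CB`, with implicit constant
depending only on `C` and the doubling constant. -/
theorem statement16 (Cd C : ℝ≥0) (hC : 1 ≤ C) :
    ∃ C'' : ℝ≥0, ∀ (X : Type) [MetricSpace X] [MeasurableSpace X] (μ : Measure X),
      Doubling μ Cd → (∀ w : X, μ {w} = 0) →
      ∀ (x₀ z : X) (R : ℝ), 0 < R → z ∈ ball x₀ (4 * C * R) →
        ∫⁻ x in ball x₀ R, edist x z / μ (ball x (dist x z)) ∂μ ≤
          C'' * ENNReal.ofReal R :=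
  statement16_general Cd C

end BVAMPaper
end
end
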